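/- arXiv:1701.06632 — 4 statements merged into one kernel-verified Lean document; each statement's English description precedes it below -/
import Mathlib

section
/- For any finite set system S there exists a simplicial complex C (a set system closed under taking subsets) with |C| = |S| and f_C(m) ≤ f_S(m) for every integer m ≥ 0. -/
/-- The shatter function of a set system `S` on the finite ground set `X`:
`f_S(m) = max { |{e ∩ Y : e ∈ S}| : Y ⊆ X, |Y| = m }`. -/
def shatter {X : Type*} [DecidableEq X] [Fintype X]
    (S : Finset (Finset X)) (m : ℕ) : ℕ :=
  (Finset.univ.powersetCard m).sup (fun Y => (S.image (· ∩ Y)).card)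

/-!
The down-compression `𝓓 a` replaces each `s ∋ a` by `s \ {a}` unless the latter is already
present. It preserves `|S|`, and the trace of `𝓓 a S` on `Y` lies inside the compression of the
trace of `S` on `Y`, so it does not increase the shatter function. Among all families `C` with
`|C| = |S|` and `f_C ≤ f_S`, one of minimal total size `∑ |s|` is fixed by every compression,
since a compression that moves something strictly lowers the total size; being closed under
deleting single elements, it is a simplicial complex.
-/

open Finset FinsetFamily

section Compression

variable {X : Type*} [DecidableEq X]

lemma isLowerSet_of_forall_erase_mem {S : Finset (Finset X)}
    (h : ∀ s ∈ S, ∀ a ∈ s, s.erase a ∈ S) : IsLowerSet (S : Set (Finset X)) := by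
  intro σ
  induction σ using Finset.strongInduction with
  | H σ ih =>
    intro τ hτσ hσ
    obtain rfl | hne := eq_or_ne τ σ
    · exact hσ
    obtain ⟨a, haσ, haτ⟩ := exists_of_ssubset (hτσ.ssubset_of_ne hne)
    exact ih _ (erase_ssubset haσ) (subset_erase.2 ⟨hτσ, haτ⟩) (h σ hσ a haσ)

lemma Down.compression_eq_image (a : X) (S : Finset (Finset X)) :
    𝓓 a S = S.image (fun s => if s.erase a ∈ S then s else s.erase a) := by
  ext t
  rw [Down.mem_compression, mem_image]
  constructor
  · rintro (⟨ht, hta⟩ | ⟨ht, hat⟩)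
    · exact ⟨t, ht, if_pos hta⟩
    · have hnot : a ∉ t := fun h => ht (by rwa [insert_eq_of_mem h] at hat)
      exact ⟨insert a t, hat, by simp [erase_insert hnot, ht]⟩
  · rintro ⟨s, hs, rfl⟩
    split_ifs with hes
    · exact .inl ⟨hs, hes⟩
    · have has : a ∈ s := by_contra fun h => hes (by rwa [erase_eq_of_notMem h])
      exact .inr ⟨hes, by rwa [insert_erase has]⟩

lemma Down.sum_card_compression_lt {a : X} {S : Finset (Finset X)} {s : Finset X}
    (hs : s ∈ S) (has : a ∈ s) (hes : s.erase a ∉ S) :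
    ∑ t ∈ 𝓓 a S, #t < ∑ t ∈ S, #t := by
  rw [Down.compression_eq_image]
  refine (sum_image_le_of_nonneg fun _ _ => Nat.zero_le _).trans_lt ?_
  refine sum_lt_sum (fun t _ => ?_) ⟨s, hs, ?_⟩
  · split_ifs
    exacts [le_rfl, card_erase_le]
  · rw [if_neg hes]
    exact card_erase_lt_of_mem has

lemma Down.image_inter_compression_subset (a : X) (S : Finset (Finset X)) (Y : Finset X) :
    (𝓓 a S).image (· ∩ Y) ⊆ 𝓓 a (S.image (· ∩ Y)) := by
  intro _ ht
  obtain ⟨u, hu, rfl⟩ := mem_image.1 ht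
  rw [Down.mem_compression] at hu ⊢
  by_cases huY : u ∩ Y ∈ S.image (· ∩ Y)
  · refine .inl ⟨huY, ?_⟩
    rcases hu with ⟨-, hua⟩ | ⟨hu, hau⟩
    · rw [← erase_inter]
      exact mem_image_of_mem _ hua
    · have hnot : a ∉ u := fun h => hu (by rwa [insert_eq_of_mem h] at hau)
      rwa [erase_eq_of_notMem fun h => hnot (mem_inter.1 h).1]
  · obtain ⟨-, hau⟩ := hu.resolve_left fun h => huY (mem_image_of_mem _ h.1)
    have haY : a ∈ Y := by_contra fun h => huY <| by
      rw [← insert_inter_of_notMem h]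
      exact mem_image_of_mem _ hau
    refine .inr ⟨huY, ?_⟩
    rw [← insert_inter_of_mem haY]
    exact mem_image_of_mem _ hau

variable [Fintype X]

lemma Down.shatter_compression_le (a : X) (S : Finset (Finset X)) (m : ℕ) :
    shatter (𝓓 a S) m ≤ shatter S m :=
  sup_mono_fun fun Y _ => (card_le_card (image_inter_compression_subset a S Y)).trans_eq
    (Down.card_compression a _)

end Compression

/-- **Lemma (Alon, Frankl).** For any finite set system `S` there exists a simplicial
complex `C` (a set system closed under taking subsets) with `|C| = |S|` and
`f_C(m) ≤ f_S(m)` for every `m`. -/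
theorem compress_to_complex {X : Type*} [DecidableEq X] [Fintype X]
    (S : Finset (Finset X)) :
    ∃ C : Finset (Finset X),
      (∀ σ ∈ C, ∀ τ ⊆ σ, τ ∈ C) ∧
      C.card = S.card ∧
      ∀ m : ℕ, shatter C m ≤ shatter S m := by
  obtain ⟨C, ⟨hcard, hshatter⟩, hmin⟩ := exists_minimalFor_of_wellFoundedLT
    (fun C : Finset (Finset X) => #C = #S ∧ ∀ m, shatter C m ≤ shatter S m)
    (fun C => ∑ s ∈ C, #s) ⟨S, rfl, fun _ => le_rfl⟩
  have hlower : ∀ s ∈ C, ∀ a ∈ s, s.erase a ∈ C := by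
    intro s hs a has
    by_contra hes
    have hlt := Down.sum_card_compression_lt hs has hes
    have hcompressed : #(𝓓 a C) = #S ∧ ∀ m, shatter (𝓓 a C) m ≤ shatter S m :=
      ⟨(Down.card_compression a C).trans hcard,
        fun m => (Down.shatter_compression_le a C m).trans (hshatter m)⟩
    exact (hmin hcompressed hlt.le).not_gt hlt
  exact ⟨C, fun σ hσ τ hτ => isLowerSet_of_forall_erase_mem hlower hτ hσ, hcard, hshatter⟩
end

section
/- Let d, m, f, r ≥ 1 be integers and suppose (T, ρ, R) is a balanced rooted d-tree with f facets and r vertex roots. Then every simplicial complex C on n vertices with δ_d(C) ≥ 2·m^{1+d/f}·n^{r/f} contains a set of m vertices that spans at least mindens(T)·(m − f − d) nonempty simplices of C. -/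
/-- A `d`-tree, defined inductively: the complex of all nonempty subsets of a
`(d+1)`-element set is a `d`-tree; and attaching a new vertex `v` to a
`(d−1)`-simplex `σ` of a `d`-tree `T` (i.e. adding all sets `τ ∪ {v}` for `τ ⊆ σ`)
yields a `d`-tree. -/
inductive IsDTree {V : Type*} [DecidableEq V] (d : ℕ) : Finset (Finset V) → Prop
  | base (σ : Finset V) (hσ : σ.card = d + 1) :
      IsDTree d (σ.powerset.filter (fun τ => τ.Nonempty))
  | attach (T : Finset (Finset V)) (σ : Finset V) (v : V)
      (hT : IsDTree d T) (hσ : σ ∈ T) (hcard : σ.card = d) (hv : v ∉ T.sup id) :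
      IsDTree d (T ∪ σ.powerset.image (insert v))

/-- Two simplices are nonadjacent in `C` if they are disjoint and no edge
(`1`-simplex, i.e. member of cardinality 2) of `C` meets both. -/
def Nonadjacent {V : Type*} [DecidableEq V] (C : Finset (Finset V))
    (σ τ : Finset V) : Prop :=
  Disjoint σ τ ∧ ∀ e ∈ C, e.card = 2 → ¬((e ∩ σ).Nonempty ∧ (e ∩ τ).Nonempty)

/-- `e_C(S)`: the number of nonempty simplices of `C` with at least one vertex in `S`. -/
def eCount {V : Type*} [DecidableEq V] (C : Finset (Finset V)) (S : Finset V) : ℕ :=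
  (C.filter (fun σ => σ.Nonempty ∧ (σ ∩ S).Nonempty)).card

/-- The density `dens_C(S) = e_C(S)/|S|`. -/
noncomputable def dens {V : Type*} [DecidableEq V] (C : Finset (Finset V))
    (S : Finset V) : ℝ :=
  (eCount C S : ℝ) / (S.card : ℝ)


namespace EmbedAux2

variable {V : Type*} [DecidableEq V]

/-- Greedy build order for a `d`-tree over base `A`, tracking current vertex set `A`
and the family `G` of sets known to embed into simplices. -/
def Ord (d : ℕ) (T : Finset (Finset V)) : Finset V → Finset (Finset V) → List (V × Finset V) → Prop
  | _, _, [] => True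
  | A, G, p :: L =>
      p.2.card = d ∧ p.2 ⊆ A ∧ p.1 ∉ A ∧ (∃ g ∈ G, p.2 ⊆ g) ∧ insert p.1 p.2 ∈ T ∧
        Ord d T (insert p.1 A) (insert (insert p.1 p.2) G) L

def accA : Finset V → List (V × Finset V) → Finset V
  | A, [] => A
  | A, p :: L => accA (insert p.1 A) L

def accG : Finset (Finset V) → List (V × Finset V) → Finset (Finset V)
  | G, [] => G
  | G, p :: L => accG (insert (insert p.1 p.2) G) L

@[simp] lemma accA_nil (A : Finset V) : accA A [] = A := rfl
@[simp] lemma accA_cons (A : Finset V) (p L) : accA A (p :: L) = accA (insert p.1 A) L := rfl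
@[simp] lemma accG_nil (G : Finset (Finset V)) : accG G [] = G := rfl
@[simp] lemma accG_cons (G : Finset (Finset V)) (p L) :
    accG G (p :: L) = accG (insert (insert p.1 p.2) G) L := rfl
@[simp] lemma Ord_nil (d : ℕ) (T : Finset (Finset V)) (A G) : Ord d T A G ([] : List (V × Finset V)) := trivial

lemma accA_subset (A : Finset V) : ∀ (L : List (V × Finset V)), A ⊆ accA A L
  | [] => Finset.Subset.refl _
  | p :: L => (Finset.subset_insert _ _).trans (accA_subset _ L)

lemma accG_subset (G : Finset (Finset V)) : ∀ (L : List (V × Finset V)), G ⊆ accG G L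
  | [] => Finset.Subset.refl _
  | p :: L => (Finset.subset_insert _ _).trans (accG_subset _ L)

lemma accA_append (A : Finset V) : ∀ (L L' : List (V × Finset V)),
    accA A (L ++ L') = accA (accA A L) L'
  | [], _ => rfl
  | p :: L, L' => accA_append (insert p.1 A) L L'

lemma accG_append (G : Finset (Finset V)) : ∀ (L L' : List (V × Finset V)),
    accG G (L ++ L') = accG (accG G L) L'
  | [], _ => rfl
  | p :: L, L' => accG_append _ L L'

lemma Ord.vertex_mem_sup {d : ℕ} {T : Finset (Finset V)} {A G} {p : V × Finset V} {L}
    (h : Ord d T A G (p :: L)) : p.1 ∈ T.sup id := by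
  have h5 : insert p.1 p.2 ∈ T := h.2.2.2.2.1
  have := Finset.le_sup (f := id) h5
  exact this (Finset.mem_insert_self _ _)

/-- Monotonicity of `Ord` in all parameters. -/
lemma Ord.mono {d : ℕ} {T T' : Finset (Finset V)} :
    ∀ {L : List (V × Finset V)} {A A' : Finset V} {G G' : Finset (Finset V)},
    Ord d T A G L → T ⊆ T' → A ⊆ A' → (∀ x ∈ A', x ∈ A ∨ x ∉ T.sup id) →
    (∀ g ∈ G, ∃ g' ∈ G', g ⊆ g') → Ord d T' A' G' L
  | [], _, _, _, _, _, _, _, _, _ => trivial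
  | p :: L, A, A', G, G', h, hT, hA, hA', hG => by
    obtain ⟨h1, h2, h3, ⟨g, hg, hgs⟩, h5, h6⟩ := h
    have hv : p.1 ∉ A' := by
      intro hx
      rcases hA' _ hx with hx' | hx'
      · exact h3 hx'
      · exact hx' (Ord.vertex_mem_sup (L := L) (G := G) ⟨h1, h2, h3, ⟨g, hg, hgs⟩, h5, h6⟩)
    obtain ⟨g', hg', hgs'⟩ := hG g hg
    refine ⟨h1, h2.trans hA, hv, ⟨g', hg', hgs.trans hgs'⟩, hT h5, ?_⟩
    refine Ord.mono h6 hT (Finset.insert_subset_insert _ hA) ?_ ?_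
    · intro x hx
      rcases Finset.mem_insert.1 hx with rfl | hx
      · exact Or.inl (Finset.mem_insert_self _ _)
      · rcases hA' x hx with hx' | hx'
        · exact Or.inl (Finset.mem_insert_of_mem hx')
        · exact Or.inr hx'
    · intro g'' hg''
      rcases Finset.mem_insert.1 hg'' with rfl | hg''
      · exact ⟨insert p.1 p.2, Finset.mem_insert_self _ _, le_rfl⟩
      · obtain ⟨g₃, hg₃, hs₃⟩ := hG _ hg''
        exact ⟨g₃, Finset.mem_insert_of_mem hg₃, hs₃⟩

lemma Ord.append_singleton {d : ℕ} {T : Finset (Finset V)} :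
    ∀ {L : List (V × Finset V)} {A G} {v : V} {σ : Finset V},
    Ord d T A G L → σ.card = d → σ ⊆ accA A L → v ∉ accA A L →
    (∃ g ∈ accG G L, σ ⊆ g) → insert v σ ∈ T →
    Ord d T A G (L ++ [(v, σ)])
  | [], A, G, v, σ, _, h1, h2, h3, h4, h5 => ⟨h1, h2, h3, h4, h5, trivial⟩
  | p :: L, A, G, v, σ, h, h1, h2, h3, h4, h5 => by
    obtain ⟨g1, g2, g3, g4, g5, g6⟩ := h
    exact ⟨g1, g2, g3, g4, g5, Ord.append_singleton g6 h1 h2 h3 h4 h5⟩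

lemma accG_cover : ∀ (L : List (V × Finset V)) {G G' : Finset (Finset V)},
    (∀ g ∈ G, ∃ g' ∈ G', g ⊆ g') → ∀ g ∈ accG G L, ∃ g' ∈ accG G' L, g ⊆ g'
  | [], G, G', h => h
  | p :: L, G, G', h => by
    refine accG_cover L ?_
    intro g hg
    rcases Finset.mem_insert.1 hg with rfl | hg
    · exact ⟨insert p.1 p.2, Finset.mem_insert_self _ _, le_rfl⟩
    · obtain ⟨g', hg', hs⟩ := h g hg
      exact ⟨g', Finset.mem_insert_of_mem hg', hs⟩

lemma Ord.accA_card {d : ℕ} {T : Finset (Finset V)} :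
    ∀ {L : List (V × Finset V)} {A G}, Ord d T A G L → (accA A L).card = A.card + L.length
  | [], _, _, _ => rfl
  | p :: L, A, G, h => by
    have := Ord.accA_card (L := L) h.2.2.2.2.2
    rw [accA_cons, this, Finset.card_insert_of_notMem h.2.2.1]
    simp [Nat.add_comm, Nat.add_assoc, Nat.add_left_comm]

lemma Ord.accG_mem {d : ℕ} {T : Finset (Finset V)} :
    ∀ {L : List (V × Finset V)} {A G}, Ord d T A G L →
      ∀ g ∈ accG G L, g ∈ G ∨ g ∈ T
  | [], _, _, _, g, hg => Or.inl hg
  | p :: L, A, G, h, g, hg => by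
    rcases Ord.accG_mem h.2.2.2.2.2 g hg with hg' | hg'
    · rcases Finset.mem_insert.1 hg' with rfl | hg''
      · exact Or.inr h.2.2.2.2.1
      · exact Or.inl hg''
    · exact Or.inr hg'



lemma sup_base (σ : Finset V) (h : σ.Nonempty) :
    (σ.powerset.filter (fun τ => τ.Nonempty)).sup id = σ := by
  apply le_antisymm
  · apply Finset.sup_le
    intro τ hτ
    exact Finset.mem_powerset.1 (Finset.mem_filter.1 hτ).1
  · exact Finset.le_sup (f := id) (Finset.mem_filter.2 ⟨Finset.mem_powerset.2 (Finset.Subset.refl σ), h⟩)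

lemma sup_attach (T : Finset (Finset V)) (σ : Finset V) (v : V) (hσ : σ ∈ T) :
    ((T ∪ σ.powerset.image (insert v)).sup id) = insert v (T.sup id) := by
  rw [Finset.sup_union]
  apply le_antisymm
  · apply sup_le
    · exact (Finset.subset_insert _ _)
    · apply Finset.sup_le
      intro τ hτ
      obtain ⟨τ', hτ', rfl⟩ := Finset.mem_image.1 hτ
      have : τ' ⊆ T.sup id := (Finset.mem_powerset.1 hτ').trans (Finset.le_sup (f := id) hσ)
      intro x hx
      rcases Finset.mem_insert.1 hx with rfl | hx
      · exact Finset.mem_insert_self _ _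
      · exact Finset.mem_insert_of_mem (this hx)
  · intro x hx
    rcases Finset.mem_insert.1 hx with rfl | hx
    · have : insert x σ ∈ σ.powerset.image (insert x) :=
        Finset.mem_image.2 ⟨σ, Finset.mem_powerset.2 (Finset.Subset.refl σ), rfl⟩
      exact Finset.mem_union.2 (Or.inr ((Finset.le_sup (f := id) this) (Finset.mem_insert_self _ _)))
    · exact Finset.mem_union.2 (Or.inl hx)

lemma card_pos_of_mem_dtree {d : ℕ} {T : Finset (Finset V)} (hT : IsDTree d T) :
    ∀ τ ∈ T, τ.Nonempty := by
  induction hT with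
  | base σ hσ => intro τ hτ; exact (Finset.mem_filter.1 hτ).2
  | attach T σ v hT hσ hcard hv ih =>
    intro τ hτ
    rcases Finset.mem_union.1 hτ with h | h
    · exact ih τ h
    · obtain ⟨τ', _, rfl⟩ := Finset.mem_image.1 h
      exact Finset.insert_nonempty _ _

lemma sup_card {d : ℕ} {T : Finset (Finset V)} (hT : IsDTree d T) :
    (T.sup id).card = d + (T.filter (fun s => s.card = d + 1)).card := by
  induction hT with
  | base σ hσ =>
    have h1 : (σ.powerset.filter (fun τ => τ.Nonempty)).sup id = σ :=
      sup_base σ (Finset.card_pos.1 (by omega))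
    have h2 : (σ.powerset.filter (fun τ => τ.Nonempty)).filter (fun s => s.card = d + 1) = {σ} := by
      apply Finset.ext
      intro s
      simp only [Finset.mem_filter, Finset.mem_powerset, Finset.mem_singleton]
      constructor
      · rintro ⟨⟨hs, -⟩, hc⟩
        exact Finset.eq_of_subset_of_card_le hs (by omega)
      · rintro rfl
        exact ⟨⟨Finset.Subset.refl _, Finset.card_pos.1 (by omega)⟩, hσ⟩
    rw [h1, h2, Finset.card_singleton, hσ]
  | attach T σ v hT hσ hcard hv ih =>
    rw [sup_attach T σ v hσ, Finset.card_insert_of_notMem hv, ih]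
    have hfil : (T ∪ σ.powerset.image (insert v)).filter (fun s => s.card = d + 1)
        = insert (insert v σ) (T.filter (fun s => s.card = d + 1)) := by
      apply Finset.ext
      intro s
      simp only [Finset.mem_filter, Finset.mem_union, Finset.mem_insert]
      constructor
      · rintro ⟨hs | hs, hc⟩
        · exact Or.inr ⟨hs, hc⟩
        · obtain ⟨τ, hτ, rfl⟩ := Finset.mem_image.1 hs
          have hτσ : τ ⊆ σ := Finset.mem_powerset.1 hτ
          have hvτ : v ∉ τ := fun h => hv ((hτσ.trans (Finset.le_sup (f := id) hσ)) h)
          have : τ.card = d := by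
            rw [Finset.card_insert_of_notMem hvτ] at hc; omega
          have : τ = σ := Finset.eq_of_subset_of_card_le hτσ (by omega)
          exact Or.inl (by rw [this])
      · rintro (rfl | ⟨hs, hc⟩)
        · refine ⟨Or.inr (Finset.mem_image.2 ⟨σ, Finset.mem_powerset.2 (Finset.Subset.refl _), rfl⟩), ?_⟩
          have hvσ : v ∉ σ := fun h => hv ((Finset.le_sup (f := id) hσ) h)
          rw [Finset.card_insert_of_notMem hvσ]
          omega
        · exact ⟨Or.inl hs, hc⟩
    rw [hfil, Finset.card_insert_of_notMem]
    · omega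
    · intro h
      have := (Finset.mem_filter.1 h).1
      exact hv ((Finset.le_sup (f := id) this) (Finset.mem_insert_self _ _))

lemma accA_insert (a : V) : ∀ (L : List (V × Finset V)) (A : Finset V),
    accA (insert a A) L = insert a (accA A L)
  | [], A => rfl
  | p :: L, A => by
    rw [accA_cons, accA_cons, Finset.insert_comm, accA_insert a L (insert p.1 A)]

lemma exists_order {d : ℕ} {T : Finset (Finset V)} (hT : IsDTree d T) :
    ∀ σ0 ∈ T, σ0.card = d →
    ∃ L : List (V × Finset V), Ord d T σ0 {σ0} L ∧ accA σ0 L = T.sup id ∧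
      ∀ τ ∈ T, ∃ g ∈ accG {σ0} L, τ ⊆ g := by
  induction hT with
  | base σ hσ =>
    intro σ0 hσ0 hc
    have hsub : σ0 ⊆ σ := Finset.mem_powerset.1 (Finset.mem_filter.1 hσ0).1
    have hne : ¬ σ ⊆ σ0 := fun h => by
      have := Finset.card_le_card h; omega
    obtain ⟨u, huσ, huσ0⟩ := Finset.not_subset.1 hne
    have hins : insert u σ0 = σ := by
      apply Finset.eq_of_subset_of_card_le
      · exact Finset.insert_subset huσ hsub
      · rw [Finset.card_insert_of_notMem huσ0]; omega
    have hmem : insert u σ0 ∈ σ.powerset.filter (fun τ => τ.Nonempty) := by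
      rw [hins]
      exact Finset.mem_filter.2 ⟨Finset.mem_powerset.2 (Finset.Subset.refl _),
        Finset.card_pos.1 (by omega)⟩
    refine ⟨[(u, σ0)], ⟨hc, Finset.Subset.refl _, huσ0,
      ⟨σ0, Finset.mem_singleton_self _, Finset.Subset.refl _⟩, hmem, trivial⟩, ?_, ?_⟩
    · show insert u σ0 = _
      rw [hins, sup_base σ (Finset.card_pos.1 (by omega))]
    · intro τ hτ
      refine ⟨insert u σ0, ?_, ?_⟩
      · show insert u σ0 ∈ insert (insert u σ0) {σ0}
        exact Finset.mem_insert_self _ _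
      · rw [hins]; exact Finset.mem_powerset.1 (Finset.mem_filter.1 hτ).1
  | attach T σ v hT hσ hcard hv ih =>
    intro σ0 hσ0 hc
    have hσsup : σ ⊆ T.sup id := Finset.le_sup (f := id) hσ
    by_cases h0 : σ0 ∈ T
    · obtain ⟨L, hO, hA, hG⟩ := ih σ0 h0 hc
      obtain ⟨g, hg, hgs⟩ := hG σ hσ
      refine ⟨L ++ [(v, σ)], ?_, ?_, ?_⟩
      · refine Ord.append_singleton ?_ hcard ?_ ?_ ⟨g, hg, hgs⟩ ?_
        · exact Ord.mono hO Finset.subset_union_left (Finset.Subset.refl _)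
            (fun x hx => Or.inl hx) (fun g' hg' => ⟨g', hg', Finset.Subset.refl _⟩)
        · rw [hA]; exact hσsup
        · rw [hA]; exact hv
        · exact Finset.mem_union.2 (Or.inr (Finset.mem_image.2
            ⟨σ, Finset.mem_powerset.2 (Finset.Subset.refl _), rfl⟩))
      · rw [accA_append, hA]
        show insert v (T.sup id) = _
        rw [sup_attach T σ v hσ]
      · intro τ hτ
        rw [accG_append]
        rcases Finset.mem_union.1 hτ with h | h
        · obtain ⟨g', hg', hgs'⟩ := hG τ h
          exact ⟨g', Finset.mem_insert_of_mem hg', hgs'⟩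
        · obtain ⟨τ', hτ', rfl⟩ := Finset.mem_image.1 h
          exact ⟨insert v σ, Finset.mem_insert_self _ _,
            Finset.insert_subset_insert _ (Finset.mem_powerset.1 hτ')⟩
    · have h1 : σ0 ∈ σ.powerset.image (insert v) := by
        rcases Finset.mem_union.1 hσ0 with h | h
        · exact absurd h h0
        · exact h
      obtain ⟨τ0, hτ0, rfl⟩ := Finset.mem_image.1 h1
      have hτ0σ : τ0 ⊆ σ := Finset.mem_powerset.1 hτ0
      have hvτ0 : v ∉ τ0 := fun h => hv (hσsup (hτ0σ h))
      have hτ0c : τ0.card = d - 1 := by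
        rw [Finset.card_insert_of_notMem hvτ0] at hc; omega
      have hd1 : 1 ≤ d := by
        by_contra h
        have : d = 0 := by omega
        rw [this] at hc
        have := card_pos_of_mem_dtree (IsDTree.attach T σ v hT hσ hcard hv) _ hσ0
        rw [Finset.card_eq_zero] at hc
        exact Finset.not_nonempty_empty (hc ▸ this)
      have hne : ¬ σ ⊆ τ0 := fun h => by
        have := Finset.card_le_card h; omega
      obtain ⟨u, huσ, huτ0⟩ := Finset.not_subset.1 hne
      have huv : u ≠ v := fun h => hv (h ▸ hσsup huσ)
      have hins : insert u τ0 = σ := by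
        apply Finset.eq_of_subset_of_card_le
        · exact Finset.insert_subset huσ hτ0σ
        · rw [Finset.card_insert_of_notMem huτ0]; omega
      have hkey : insert u (insert v τ0) = insert v σ := by
        rw [Finset.insert_comm, hins]
      obtain ⟨L, hO, hA, hG⟩ := ih σ hσ hcard
      have hmemT' : insert u (insert v τ0) ∈ T ∪ σ.powerset.image (insert v) := by
        rw [hkey]
        exact Finset.mem_union.2 (Or.inr (Finset.mem_image.2
          ⟨σ, Finset.mem_powerset.2 (Finset.Subset.refl _), rfl⟩))
      refine ⟨(u, insert v τ0) :: L, ⟨hc, Finset.Subset.refl _, ?_,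
        ⟨insert v τ0, Finset.mem_singleton_self _, Finset.Subset.refl _⟩, hmemT', ?_⟩, ?_, ?_⟩
      · intro h
        rcases Finset.mem_insert.1 h with h | h
        · exact huv h
        · exact huτ0 h
      · refine Ord.mono hO Finset.subset_union_left ?_ ?_ ?_
        · rw [← hins]
          intro x hx
          rcases Finset.mem_insert.1 hx with rfl | hx
          · exact Finset.mem_insert_self _ _
          · exact Finset.mem_insert_of_mem (Finset.mem_insert_of_mem hx)
        · intro x hx
          rcases Finset.mem_insert.1 hx with rfl | hx
          · exact Or.inl huσ
          · rcases Finset.mem_insert.1 hx with rfl | hx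
            · exact Or.inr hv
            · exact Or.inl (hτ0σ hx)
        · intro g hg
          rw [Finset.mem_singleton.1 hg]
          refine ⟨insert u (insert v τ0), Finset.mem_insert_self _ _, ?_⟩
          rw [hkey]
          exact Finset.subset_insert _ _
      · show accA (insert u (insert v τ0)) L = _
        rw [show insert u (insert v τ0) = insert v σ from hkey, accA_insert, hA,
          sup_attach T σ v hσ]
      · intro τ hτ
        show ∃ g ∈ accG (insert (insert u (insert v τ0)) {insert v τ0}) L, τ ⊆ g
        rcases Finset.mem_union.1 hτ with h | h
        · obtain ⟨g', hg', hgs'⟩ := hG τ h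
          have hcov := accG_cover L (G := {σ})
            (G' := insert (insert u (insert v τ0)) {insert v τ0}) ?_ g' hg'
          · obtain ⟨g'', hg'', hgs''⟩ := hcov
            exact ⟨g'', hg'', hgs'.trans hgs''⟩
          · intro g hg
            rw [Finset.mem_singleton.1 hg]
            refine ⟨insert u (insert v τ0), Finset.mem_insert_self _ _, ?_⟩
            rw [hkey]
            exact Finset.subset_insert _ _
        · obtain ⟨τ', hτ', rfl⟩ := Finset.mem_image.1 h
          refine ⟨insert u (insert v τ0), accG_subset _ _ (Finset.mem_insert_self _ _), ?_⟩
          rw [hkey]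
          exact Finset.insert_subset_insert _ (Finset.mem_powerset.1 hτ')


section Emb
variable {n : ℕ}

def EmbSet (C : Finset (Finset (Fin n))) :
    (V → Fin n) → Finset (Fin n) → List (V × Finset V) → Finset (List (Fin n))
  | _, _, [] => {[]}
  | φ, B, p :: L =>
    (Finset.univ.filter fun x => x ∉ B ∧ (insert p.1 p.2).image (Function.update φ p.1 x) ∈ C).biUnion
      fun x => (EmbSet C (Function.update φ p.1 x) (insert x B) L).image (x :: ·)

def endMap : (V → Fin n) → List (V × Finset V) → List (Fin n) → (V → Fin n)
  | φ, p :: L, x :: xs => endMap (Function.update φ p.1 x) L xs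
  | φ, _, _ => φ

@[simp] lemma endMap_nil (φ : V → Fin n) (L : List (V × Finset V)) : endMap φ L [] = φ := by
  cases L <;> rfl

@[simp] lemma endMap_cons (φ : V → Fin n) (p : V × Finset V) (L : List (V × Finset V))
    (x : Fin n) (xs : List (Fin n)) :
    endMap φ (p :: L) (x :: xs) = endMap (Function.update φ p.1 x) L xs := rfl

lemma mem_embSet_cons {C : Finset (Finset (Fin n))} {φ : V → Fin n} {B : Finset (Fin n)}
    {p : V × Finset V} {L : List (V × Finset V)} {ys : List (Fin n)} :
    ys ∈ EmbSet C φ B (p :: L) ↔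
      ∃ x, (x ∉ B ∧ (insert p.1 p.2).image (Function.update φ p.1 x) ∈ C) ∧
        ∃ xs ∈ EmbSet C (Function.update φ p.1 x) (insert x B) L, ys = x :: xs := by
  show ys ∈ Finset.biUnion _ _ ↔ _
  rw [Finset.mem_biUnion]
  constructor
  · rintro ⟨x, hx, hys⟩
    obtain ⟨xs, hxs, rfl⟩ := Finset.mem_image.1 hys
    have hx' := Finset.mem_filter.1 hx
    exact ⟨x, hx'.2, xs, hxs, rfl⟩
  · rintro ⟨x, hx, xs, hxs, rfl⟩
    exact ⟨x, Finset.mem_filter.2 ⟨Finset.mem_univ _, hx⟩,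
      Finset.mem_image.2 ⟨xs, hxs, rfl⟩⟩

lemma image_update_of_notMem (φ : V → Fin n) (v : V) (x : Fin n) {s : Finset V} (h : v ∉ s) :
    s.image (Function.update φ v x) = s.image φ := by
  apply Finset.image_congr
  intro w hw
  exact Function.update_of_ne (by rintro rfl; exact h hw) _ _

lemma embSet_props {C : Finset (Finset (Fin n))} (hC : ∀ σ ∈ C, ∀ τ ⊆ σ, τ ∈ C)
    {d : ℕ} {T : Finset (Finset V)} :
    ∀ (L : List (V × Finset V)) (A : Finset V) (G : Finset (Finset V)) (φ : V → Fin n)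
      (B : Finset (Fin n)),
    Ord d T A G L →
    (∀ g ∈ G, g ⊆ A ∧ g.image φ ∈ C) →
    A.image φ = B → A.card = B.card →
    ∀ xs ∈ EmbSet C φ B L,
      xs.length = L.length ∧
      (∀ w ∈ A, endMap φ L xs w = φ w) ∧
      (accA A L).image (endMap φ L xs) = B ∪ xs.toFinset ∧
      (accA A L).card = (B ∪ xs.toFinset).card ∧
      (∀ g ∈ accG G L, g.image (endMap φ L xs) ∈ C)
  | [], A, G, φ, B, hO, hG, hAB, hcard, xs, hxs => by
    have : xs = [] := Finset.mem_singleton.1 hxs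
    subst this
    refine ⟨rfl, fun w _ => rfl, ?_, ?_, ?_⟩
    · simpa using hAB
    · simpa using hcard
    · intro g hg
      exact (hG g (by simpa [accG] using hg)).2
  | p :: L, A, G, φ, B, hO, hG, hAB, hcard, ys, hys => by
    obtain ⟨h1, h2, h3, _h4, _h5, h6⟩ := hO
    obtain ⟨x, ⟨hxB, hxC⟩, xs, hxs, rfl⟩ := mem_embSet_cons.1 hys
    set φ' := Function.update φ p.1 x with hφ'
    have hupd : ∀ {s : Finset V}, s ⊆ A → s.image φ' = s.image φ := by
      intro s hs
      exact image_update_of_notMem φ p.1 x (fun h => h3 (hs h))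
    have hG' : ∀ g ∈ insert (insert p.1 p.2) G, g ⊆ insert p.1 A ∧ g.image φ' ∈ C := by
      intro g hg
      rcases Finset.mem_insert.1 hg with rfl | hg
      · exact ⟨Finset.insert_subset_insert _ h2, hxC⟩
      · obtain ⟨hgA, hgC⟩ := hG g hg
        refine ⟨hgA.trans (Finset.subset_insert _ _), ?_⟩
        rw [hupd hgA]; exact hgC
    have hAB' : (insert p.1 A).image φ' = insert x B := by
      rw [Finset.image_insert, hupd (Finset.Subset.refl A)]
      rw [hφ', Function.update_self, hAB]
    have hcard' : (insert p.1 A).card = (insert x B).card := by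
      rw [Finset.card_insert_of_notMem h3, Finset.card_insert_of_notMem hxB, hcard]
    obtain ⟨ih1, ih2, ih3, ih4, ih5⟩ :=
      embSet_props hC L (insert p.1 A) (insert (insert p.1 p.2) G) φ' (insert x B)
        h6 hG' hAB' hcard' xs hxs
    have hsets : insert x B ∪ xs.toFinset = B ∪ (x :: xs).toFinset := by
      simp [List.toFinset_cons, Finset.union_comm, Finset.insert_union, Finset.union_insert]
    refine ⟨by simpa using ih1, ?_, ?_, ?_, ?_⟩
    · intro w hw
      rw [endMap_cons]
      have : endMap φ' L xs w = φ' w := ih2 w (Finset.mem_insert_of_mem hw)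
      rw [this, hφ', Function.update_of_ne (by rintro rfl; exact h3 hw)]
    · rw [accA_cons, endMap_cons, ih3, hsets]
    · rw [accA_cons, ih4, hsets]
    · intro g hg
      rw [endMap_cons]
      exact ih5 g (by simpa [accG] using hg)

lemma embSet_card_lb {C : Finset (Finset (Fin n))} (hC : ∀ σ ∈ C, ∀ τ ⊆ σ, τ ∈ C)
    {d : ℕ} {T : Finset (Finset V)} (hd : 1 ≤ d) (Dr : ℝ) (m : ℕ)
    (hdeg : ∀ σ ∈ C, σ.card = d →
      Dr ≤ ((C.filter (fun τ => σ ⊆ τ ∧ τ.card = d + 1)).card : ℝ))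
    (hDm : 2 * (m : ℝ) ≤ Dr) :
    ∀ (L : List (V × Finset V)) (A : Finset V) (G : Finset (Finset V)) (φ : V → Fin n)
      (B : Finset (Fin n)),
    Ord d T A G L →
    (∀ g ∈ G, g ⊆ A ∧ g.image φ ∈ C) →
    A.image φ = B → A.card = B.card →
    B.card + L.length ≤ m →
    (Dr - m) ^ L.length ≤ ((EmbSet C φ B L).card : ℝ)
  | [], A, G, φ, B, hO, hG, hAB, hcard, hm => by
    show (Dr - m) ^ 0 ≤ ((Finset.card {([] : List (Fin n))} : ℕ) : ℝ)
    simp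
  | p :: L, A, G, φ, B, hO, hG, hAB, hcard, hm => by
    obtain ⟨h1, h2, h3, ⟨g, hg, hgs⟩, h5, h6⟩ := hO
    have hmR : (0:ℝ) ≤ (m:ℝ) := Nat.cast_nonneg _
    have hDm0 : (m : ℝ) ≤ Dr - m := by linarith
    have hDm0' : (0:ℝ) ≤ Dr - m := by linarith
    -- injectivity of φ on A
    have hinj : Set.InjOn φ A := by
      rw [← Finset.card_image_iff]
      rw [hAB, hcard]
    -- the attachment simplex image
    have hσC : p.2.image φ ∈ C := by
      have hgsub : p.2.image φ ⊆ g.image φ := Finset.image_subset_image hgs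
      exact hC _ (hG g hg).2 _ hgsub
    have hσcard : (p.2.image φ).card = d := by
      rw [Finset.card_image_of_injOn (hinj.mono (by exact_mod_cast h2))]
      exact h1
    have hdegσ := hdeg _ hσC hσcard
    set σφ := p.2.image φ with hσφ
    set Ext := C.filter (fun τ => σφ ⊆ τ ∧ τ.card = d + 1) with hExt
    set S := (Finset.univ.filter fun x => x ∉ B ∧
      (insert p.1 p.2).image (Function.update φ p.1 x) ∈ C) with hS
    -- each τ ∈ Ext gives a unique extra vertex
    have hsdiff : ∀ τ ∈ Ext, ∃ x, τ \ σφ = {x} := by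
      intro τ hτ
      have hmem := Finset.mem_filter.1 hτ
      rw [← Finset.card_eq_one, Finset.card_sdiff_of_subset hmem.2.1, hmem.2.2, hσcard]
      omega
    have hx0 : σφ.Nonempty := Finset.card_pos.1 (by omega)
    set x0 := σφ.min' hx0 with hx0def
    set pick : Finset (Fin n) → Fin n := fun τ =>
      if h : (τ \ σφ).Nonempty then (τ \ σφ).min' h else x0 with hpick
    have hpick_mem : ∀ (τ : Finset (Fin n)), (τ \ σφ).Nonempty → pick τ ∈ τ \ σφ := by
      intro τ h
      show (if h' : (τ \ σφ).Nonempty then (τ \ σφ).min' h' else x0) ∈ τ \ σφ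
      rw [dif_pos h]
      exact Finset.min'_mem _ h
    have hpick_spec : ∀ τ ∈ Ext, τ = insert (pick τ) σφ ∧ pick τ ∉ σφ := by
      intro τ hτ
      obtain ⟨x, hx⟩ := hsdiff τ hτ
      have hne : (τ \ σφ).Nonempty := by rw [hx]; exact ⟨x, Finset.mem_singleton_self _⟩
      have hpx : pick τ = x := by
        have := hpick_mem τ hne
        rw [hx] at this
        exact Finset.mem_singleton.1 this
      have hτsub : σφ ⊆ τ := ((Finset.mem_filter.1 hτ).2).1
      constructor
      · rw [hpx]
        apply Finset.Subset.antisymm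
        · intro y hy
          by_cases hyσ : y ∈ σφ
          · exact Finset.mem_insert_of_mem hyσ
          · have : y ∈ τ \ σφ := Finset.mem_sdiff.2 ⟨hy, hyσ⟩
            rw [hx] at this
            exact Finset.mem_insert.2 (Or.inl (Finset.mem_singleton.1 this))
        · exact Finset.insert_subset (by
            have : x ∈ τ \ σφ := by rw [hx]; exact Finset.mem_singleton_self _
            exact (Finset.mem_sdiff.1 this).1) hτsub
      · rw [hpx]
        have : x ∈ τ \ σφ := by rw [hx]; exact Finset.mem_singleton_self _
        exact (Finset.mem_sdiff.1 this).2
    have hpick_inj : Set.InjOn pick Ext := by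
      intro τ1 h1' τ2 h2' he
      rw [(hpick_spec τ1 h1').1, (hpick_spec τ2 h2').1, he]
    have hpick_into : ∀ τ ∈ Ext, pick τ ∈ S ∪ B := by
      intro τ hτ
      by_cases hB : pick τ ∈ B
      · exact Finset.mem_union_right _ hB
      · apply Finset.mem_union_left
        rw [hS]
        refine Finset.mem_filter.2 ⟨Finset.mem_univ _, hB, ?_⟩
        have himg : (insert p.1 p.2).image (Function.update φ p.1 (pick τ)) =
            insert (pick τ) σφ := by
          rw [Finset.image_insert, Function.update_self,
            image_update_of_notMem φ p.1 (pick τ) (fun h => h3 (h2 h))]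
        rw [himg, ← (hpick_spec τ hτ).1]
        exact (Finset.mem_filter.1 hτ).1
    have hExtS : (Ext.card : ℝ) ≤ (S.card : ℝ) + (B.card : ℝ) := by
      have h1' : Ext.card ≤ (S ∪ B).card :=
        Finset.card_le_card_of_injOn pick hpick_into hpick_inj
      have h2' : (S ∪ B).card ≤ S.card + B.card := Finset.card_union_le _ _
      exact_mod_cast le_trans h1' h2'
    have hScard : Dr - (m:ℝ) ≤ (S.card : ℝ) := by
      have hBm : (B.card : ℝ) ≤ (m : ℝ) := by
        have : B.card ≤ m := by
          have := hm; simp only [List.length_cons] at this; omega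
        exact_mod_cast this
      linarith
    -- recursion
    show (Dr - m) ^ (L.length + 1) ≤ ((Finset.biUnion _ _).card : ℝ)
    rw [Finset.card_biUnion]
    · push_cast
      have hterm : ∀ x ∈ S, (Dr - m) ^ L.length ≤
          (((EmbSet C (Function.update φ p.1 x) (insert x B) L).image (x :: ·)).card : ℝ) := by
        intro x hx
        obtain ⟨-, hxB, hxC⟩ := Finset.mem_filter.1 hx
        rw [Finset.card_image_of_injective _ (fun a b h => by injection h)]
        apply embSet_card_lb hC hd Dr m hdeg hDm L (insert p.1 A)
          (insert (insert p.1 p.2) G) _ _ h6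
        · intro g' hg'
          rcases Finset.mem_insert.1 hg' with rfl | hg'
          · exact ⟨Finset.insert_subset_insert _ h2, hxC⟩
          · obtain ⟨hgA, hgC⟩ := hG g' hg'
            refine ⟨hgA.trans (Finset.subset_insert _ _), ?_⟩
            rw [image_update_of_notMem φ p.1 x (fun h => h3 (hgA h))]
            exact hgC
        · rw [Finset.image_insert, Function.update_self,
            image_update_of_notMem φ p.1 x (fun h => h3 h), hAB]
        · rw [Finset.card_insert_of_notMem h3, Finset.card_insert_of_notMem hxB, hcard]
        · rw [Finset.card_insert_of_notMem hxB]
          have := hm; simp only [List.length_cons] at this; omega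
      calc (Dr - m) ^ (L.length + 1) = (Dr - m) * (Dr - m) ^ L.length := by ring
        _ ≤ (S.card : ℝ) * (Dr - m) ^ L.length := by
            apply mul_le_mul_of_nonneg_right hScard (pow_nonneg hDm0' _)
        _ = ∑ _x ∈ S, (Dr - m) ^ L.length := by
            rw [Finset.sum_const, nsmul_eq_mul]
        _ ≤ ∑ x ∈ S, (((EmbSet C (Function.update φ p.1 x) (insert x B) L).image (x :: ·)).card : ℝ) :=
            Finset.sum_le_sum hterm
        _ = _ := by push_cast; ring
    · intro x hx y hy hxy
      apply Finset.disjoint_left.2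
      intro l hl1 hl2
      obtain ⟨l1, -, rfl⟩ := Finset.mem_image.1 hl1
      obtain ⟨l2, -, he⟩ := Finset.mem_image.1 hl2
      exact hxy (by injection he.symm)

lemma image_inj_aux {α β : Type*} [DecidableEq α] [DecidableEq β] {g : α → β} {s : Finset α}
    (hg : Set.InjOn g s) {τ1 τ2 : Finset α} (h1 : τ1 ⊆ s) (h2 : τ2 ⊆ s)
    (he : τ1.image g = τ2.image g) : τ1 = τ2 := by
  apply Finset.Subset.antisymm
  · intro a ha
    have : g a ∈ τ2.image g := he ▸ Finset.mem_image_of_mem g ha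
    obtain ⟨b, hb, hba⟩ := Finset.mem_image.1 this
    rwa [← hg (h2 hb) (h1 ha) hba]
  · intro a ha
    have : g a ∈ τ1.image g := he ▸ Finset.mem_image_of_mem g ha
    obtain ⟨b, hb, hba⟩ := Finset.mem_image.1 this
    rwa [← hg (h1 hb) (h2 ha) hba]

lemma filter_ext_card_le {n d : ℕ} (C : Finset (Finset (Fin n))) (s0 : Finset (Fin n))
    (h : s0.card = d) (hd : 1 ≤ d) :
    (C.filter (fun τ => s0 ⊆ τ ∧ τ.card = d + 1)).card + d ≤ n := by
  have hs0ne : s0.Nonempty := Finset.card_pos.1 (by omega)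
  set x0 := s0.min' hs0ne with hx0
  set Ext := C.filter (fun τ => s0 ⊆ τ ∧ τ.card = d + 1) with hExt
  set pick : Finset (Fin n) → Fin n := fun τ =>
    if h : (τ \ s0).Nonempty then (τ \ s0).min' h else x0 with hpick
  have hpick_mem : ∀ (τ : Finset (Fin n)), (τ \ s0).Nonempty → pick τ ∈ τ \ s0 := by
    intro τ hne
    show (if h' : (τ \ s0).Nonempty then (τ \ s0).min' h' else x0) ∈ τ \ s0
    rw [dif_pos hne]
    exact Finset.min'_mem _ hne
  have hsd : ∀ τ ∈ Ext, (τ \ s0).Nonempty := by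
    intro τ hτ
    have hmem := Finset.mem_filter.1 hτ
    rw [← Finset.card_pos, Finset.card_sdiff_of_subset hmem.2.1, hmem.2.2, h]
    omega
  have hspec : ∀ τ ∈ Ext, τ = insert (pick τ) s0 := by
    intro τ hτ
    have hmem := Finset.mem_filter.1 hτ
    have hp := hpick_mem τ (hsd τ hτ)
    have hone : τ \ s0 = {pick τ} := by
      have hc1 : (τ \ s0).card = 1 := by
        rw [Finset.card_sdiff_of_subset hmem.2.1, hmem.2.2, h]; omega
      obtain ⟨a, ha⟩ := Finset.card_eq_one.1 hc1
      rw [ha] at hp ⊢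
      rw [Finset.mem_singleton.1 hp]
    apply Finset.eq_of_subset_of_card_le
    · intro y hy
      by_cases hys : y ∈ s0
      · exact Finset.mem_insert_of_mem hys
      · have : y ∈ τ \ s0 := Finset.mem_sdiff.2 ⟨hy, hys⟩
        rw [hone] at this
        exact Finset.mem_insert.2 (Or.inl (Finset.mem_singleton.1 this))
    · calc (insert (pick τ) s0).card ≤ s0.card + 1 := Finset.card_insert_le _ _
        _ ≤ τ.card := by rw [hmem.2.2, h]
  have hinj : Set.InjOn pick Ext := by
    intro τ1 h1 τ2 h2 he
    rw [hspec τ1 h1, hspec τ2 h2, he]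
  have hinto : ∀ τ ∈ Ext, pick τ ∈ Finset.univ \ s0 := by
    intro τ hτ
    have := hpick_mem τ (hsd τ hτ)
    exact Finset.mem_sdiff.2 ⟨Finset.mem_univ _, (Finset.mem_sdiff.1 this).2⟩
  have hcard := Finset.card_le_card_of_injOn pick hinto hinj
  have hdn : d ≤ n := by
    rw [← h]
    simpa using Finset.card_le_card (Finset.subset_univ s0)
  rw [Finset.card_sdiff_of_subset (Finset.subset_univ s0), h] at hcard
  simp only [Finset.card_univ, Fintype.card_fin] at hcard
  omega

end Emb
end EmbedAux2

open EmbedAux2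

/-- **Lemma (embedding balanced rooted trees).** Let `d, m, f, r ≥ 1` and let
`(T, ρ, R)` be a balanced rooted `d`-tree with `f` facets and `r` vertex roots
(so, by balancedness, `mindens(T)` is the density of the set of all unrooted
vertices `T.sup id \ (ρ ∪ R)`).  Every simplicial complex `C` on `n` vertices with
`δ_d(C) ≥ 2·m^(1+d/f)·n^(r/f)` contains `m` vertices spanning at least
`mindens(T)·(m − f − d)` nonempty simplices. -/
theorem embed_balanced_tree {V : Type*} [DecidableEq V]
    (d m f r n : ℕ) (hd : 1 ≤ d) (hm : 1 ≤ m) (hf : 1 ≤ f) (hr : 1 ≤ r)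
    (T : Finset (Finset V)) (ρ : Finset V) (R : Finset V)
    (hTree : IsDTree d T) (hρT : ρ ∈ T) (hρcard : ρ.card = d)
    (hRV : R ⊆ T.sup id)
    (hRind : ∀ u ∈ R, ∀ v ∈ R, u ≠ v → Nonadjacent T {u} {v})
    (hRρ : ∀ v ∈ R, Nonadjacent T ρ {v})
    (hfacets : (T.filter (fun σ => σ.card = d + 1)).card = f)
    (hroots : R.card = r)
    (hbal : ∀ S ⊆ T.sup id \ (ρ ∪ R), S.Nonempty →
      dens T (T.sup id \ (ρ ∪ R)) ≤ dens T S)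
    (C : Finset (Finset (Fin n)))
    (hC : ∀ σ ∈ C, ∀ τ ⊆ σ, τ ∈ C)
    (hCV : C.sup id = Finset.univ)
    (hex : ∃ σ ∈ C, σ.card = d)
    (hdeg : ∀ σ ∈ C, σ.card = d →
      2 * (m : ℝ) ^ ((1 : ℝ) + (d : ℝ) / (f : ℝ)) * (n : ℝ) ^ ((r : ℝ) / (f : ℝ)) ≤
        ((C.filter (fun τ => σ ⊆ τ ∧ τ.card = d + 1)).card : ℝ)) :
    ∃ W : Finset (Fin n), W.card = m ∧
      dens T (T.sup id \ (ρ ∪ R)) * ((m : ℝ) - f - d) ≤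
        ((C.filter (fun σ => σ.Nonempty ∧ σ ⊆ W)).card : ℝ) := by
  classical
  set U := T.sup id \ (ρ ∪ R) with hU
  have hdensU0 : 0 ≤ dens T U := div_nonneg (Nat.cast_nonneg _) (Nat.cast_nonneg _)
  obtain ⟨s0, hs0C, hs0card⟩ := hex
  have hs0ne : s0.Nonempty := Finset.card_pos.1 (by omega)
  have hn1 : 1 ≤ n := (hs0ne.elim fun x _ => x.pos)
  set Dr : ℝ := 2 * (m : ℝ) ^ ((1 : ℝ) + (d : ℝ) / (f : ℝ)) * (n : ℝ) ^ ((r : ℝ) / (f : ℝ))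
    with hDr
  have hf0 : (0:ℝ) < f := by exact_mod_cast hf
  have hm1R : (1:ℝ) ≤ m := by exact_mod_cast hm
  have hn1R : (1:ℝ) ≤ n := by exact_mod_cast hn1
  have hmpow : (m:ℝ) ≤ (m:ℝ) ^ ((1:ℝ) + (d:ℝ)/(f:ℝ)) := by
    nth_rewrite 1 [← Real.rpow_one (m:ℝ)]
    apply Real.rpow_le_rpow_of_exponent_le hm1R
    have : (0:ℝ) ≤ (d:ℝ)/(f:ℝ) := div_nonneg (Nat.cast_nonneg _) (Nat.cast_nonneg _)
    linarith
  have hnpow1 : (1:ℝ) ≤ (n:ℝ) ^ ((r:ℝ)/(f:ℝ)) :=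
    Real.one_le_rpow hn1R (div_nonneg (Nat.cast_nonneg _) (Nat.cast_nonneg _))
  have hmpow0 : (0:ℝ) ≤ (m:ℝ) ^ ((1:ℝ) + (d:ℝ)/(f:ℝ)) := Real.rpow_nonneg (Nat.cast_nonneg _) _
  have hDm : 2 * (m:ℝ) ≤ Dr := by
    rw [hDr]
    nlinarith
  have hDrn : Dr ≤ (n:ℝ) - d := by
    have h1 := hdeg s0 hs0C hs0card
    have h2 := filter_ext_card_le C s0 hs0card hd
    have : ((C.filter (fun τ => s0 ⊆ τ ∧ τ.card = d + 1)).card : ℝ) + d ≤ n := by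
      exact_mod_cast h2
    linarith
  have hd0R : (0:ℝ) ≤ d := Nat.cast_nonneg _
  have hmn : m ≤ n := by
    have : (m:ℝ) ≤ (n:ℝ) := by linarith
    exact_mod_cast this
  by_cases hcase : m ≤ f + d
  · obtain ⟨W, -, hWcard⟩ :=
      Finset.exists_superset_card_eq (s := (∅ : Finset (Fin n))) (by simp)
        (by simpa [Fintype.card_fin] using hmn)
    refine ⟨W, hWcard, ?_⟩
    have hneg : ((m:ℝ) - f - d) ≤ 0 := by
      have : (m:ℝ) ≤ (f:ℝ) + d := by exact_mod_cast hcase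
      linarith
    exact le_trans (mul_nonpos_of_nonneg_of_nonpos hdensU0 hneg) (Nat.cast_nonneg _)
  push_neg at hcase
  have hrf : r < f := by
    by_contra hcon
    push_neg at hcon
    have h1 : (n:ℝ) ≤ (n:ℝ) ^ ((r:ℝ)/(f:ℝ)) := by
      nth_rewrite 1 [← Real.rpow_one (n:ℝ)]
      apply Real.rpow_le_rpow_of_exponent_le hn1R
      rw [le_div_iff₀ hf0]
      exact_mod_cast by omega
    have h2 : 2 * (n:ℝ) ≤ Dr := by
      rw [hDr]
      nlinarith
    linarith
  -- the build order
  obtain ⟨L, hOrd, hAcc, hCov⟩ := exists_order hTree ρ hρT hρcard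
  have hsupcard : (T.sup id).card = d + f := by rw [sup_card hTree, hfacets]
  have hLf : L.length = f := by
    have h1 := Ord.accA_card hOrd
    rw [hAcc, hsupcard, hρcard] at h1
    omega
  -- initial vertex map
  have hρs0 : ρ.card = s0.card := by rw [hρcard, hs0card]
  have hφ0 : ∃ φ0 : V → Fin n, ρ.image φ0 = s0 := by
    have e := Finset.equivOfCardEq hρs0
    obtain ⟨x0, hx0⟩ := hs0ne
    refine ⟨fun w => if h : w ∈ ρ then (e ⟨w, h⟩ : Fin n) else x0, ?_⟩
    apply Finset.Subset.antisymm
    · intro y hy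
      obtain ⟨w, hw, he'⟩ := Finset.mem_image.1 hy
      rw [dif_pos hw] at he'
      rw [← he']
      exact (e ⟨w, hw⟩).2
    · intro y hy
      apply Finset.mem_image.2
      refine ⟨(e.symm ⟨y, hy⟩ : V), (e.symm ⟨y, hy⟩).2, ?_⟩
      rw [dif_pos (e.symm ⟨y, hy⟩).2]
      have h1 : (⟨(e.symm ⟨y, hy⟩ : V), (e.symm ⟨y, hy⟩).2⟩ : {x // x ∈ ρ}) = e.symm ⟨y, hy⟩ :=
        Subtype.ext rfl
      rw [h1, Equiv.apply_symm_apply]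
  obtain ⟨φ0, hρimg⟩ := hφ0
  have hG0 : ∀ g ∈ ({ρ} : Finset (Finset V)), g ⊆ ρ ∧ g.image φ0 ∈ C := by
    intro g hg
    rw [Finset.mem_singleton.1 hg]
    exact ⟨Finset.Subset.refl _, by rw [hρimg]; exact hs0C⟩
  -- count embeddings
  set E := EmbSet C φ0 s0 L with hE
  have hEcard : (m:ℝ)^(f+d) * (n:ℝ)^r ≤ (E.card : ℝ) := by
    have h2 : (Dr - m) ^ L.length ≤ (E.card : ℝ) := by
      apply embSet_card_lb hC hd Dr m hdeg hDm L ρ {ρ} φ0 s0 hOrd hG0 hρimg hρs0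
      rw [hLf, ← hρs0, hρcard]
      omega
    have hDr2 : (0:ℝ) ≤ Dr / 2 := by linarith
    have h3 : (Dr/2) ^ f ≤ (Dr - m) ^ f := by
      apply pow_le_pow_left₀ hDr2
      linarith
    have h4 : (Dr/2) ^ f = (m:ℝ)^(f+d) * (n:ℝ)^r := by
      have h5 : Dr/2 = (m:ℝ) ^ ((1:ℝ) + (d:ℝ)/(f:ℝ)) * (n:ℝ) ^ ((r:ℝ)/(f:ℝ)) := by
        rw [hDr]; ring
      rw [h5, mul_pow, ← Real.rpow_natCast ((m:ℝ) ^ ((1:ℝ) + (d:ℝ)/(f:ℝ))) f,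
        ← Real.rpow_natCast ((n:ℝ) ^ ((r:ℝ)/(f:ℝ))) f,
        ← Real.rpow_mul (Nat.cast_nonneg m), ← Real.rpow_mul (Nat.cast_nonneg n)]
      have e1 : ((1:ℝ) + (d:ℝ)/(f:ℝ)) * (f:ℕ) = ((f + d : ℕ) : ℝ) := by
        push_cast
        field_simp
      have e2 : ((r:ℝ)/(f:ℝ)) * (f:ℕ) = ((r : ℕ) : ℝ) := by
        push_cast
        field_simp
      rw [e1, e2, Real.rpow_natCast, Real.rpow_natCast]
    rw [← h4]
    rw [hLf] at h2
    linarith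
  -- pigeonhole on root images
  have hRacc : R ⊆ accA ρ L := by rw [hAcc]; exact hRV
  have hfiber : ∃ Y : Finset (Fin n), Y.card = r ∧
      m^(f+d) ≤ (E.filter (fun xs => R.image (endMap φ0 L xs) = Y)).card := by
    have hrn : r ≤ n := by omega
    have hne : (Finset.powersetCard r (Finset.univ : Finset (Fin n))).Nonempty := by
      apply Finset.powersetCard_nonempty.2
      simpa [Finset.card_univ, Fintype.card_fin] using hrn
    have hmaps : ∀ xs ∈ E, R.image (endMap φ0 L xs) ∈
        Finset.powersetCard r (Finset.univ : Finset (Fin n)) := by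
      intro xs hxs
      obtain ⟨-, -, himg, hcards, -⟩ :=
        embSet_props hC L ρ {ρ} φ0 s0 hOrd hG0 hρimg hρs0 xs hxs
      have hinj : Set.InjOn (endMap φ0 L xs) (accA ρ L) := by
        apply Finset.card_image_iff.1
        rw [himg, ← hcards]
      rw [Finset.mem_powersetCard]
      refine ⟨Finset.subset_univ _, ?_⟩
      rw [Finset.card_image_of_injOn (hinj.mono (by exact_mod_cast hRacc)), hroots]
    have hmul : (Finset.powersetCard r (Finset.univ : Finset (Fin n))).card * m^(f+d)
        ≤ E.card := by
      have hc1 : (Finset.powersetCard r (Finset.univ : Finset (Fin n))).card = n.choose r := by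
        rw [Finset.card_powersetCard, Finset.card_univ, Fintype.card_fin]
      have hc2 : n.choose r * m^(f+d) ≤ n^r * m^(f+d) :=
        Nat.mul_le_mul_right _ (Nat.choose_le_pow n r)
      have hc3 : n^r * m^(f+d) ≤ E.card := by
        have : ((n^r * m^(f+d) : ℕ) : ℝ) ≤ (E.card : ℝ) := by
          push_cast
          linarith [hEcard]
        exact_mod_cast this
      rw [hc1]
      exact le_trans hc2 hc3
    obtain ⟨Y, hYmem, hYfib⟩ :=
      Finset.exists_le_card_fiber_of_mul_le_card_of_maps_to hmaps hne hmul
    exact ⟨Y, (Finset.mem_powersetCard.1 hYmem).2, hYfib⟩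
  obtain ⟨Y, hYcard, hFcard⟩ := hfiber
  set F := E.filter (fun xs => R.image (endMap φ0 L xs) = Y) with hF
  -- cardinality of the unrooted set
  have hρRsub : ρ ∪ R ⊆ T.sup id :=
    Finset.union_subset (Finset.le_sup (f := id) hρT) hRV
  have hρRdisj : Disjoint ρ R := by
    rw [Finset.disjoint_right]
    intro v hv
    have := (hRρ v hv).1
    rw [Finset.disjoint_right] at this
    exact this (Finset.mem_singleton_self v)
  have hUcard : U.card = f - r := by
    rw [hU, Finset.card_sdiff_of_subset hρRsub, hsupcard,
      Finset.card_union_of_disjoint hρRdisj, hρcard, hroots]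
    omega
  -- main loop
  have Claim : ∀ j : ℕ, ∃ (W' : Finset (Fin n)) (c : ℕ),
      s0 ∪ Y ⊆ W' ∧ W'.card ≤ d + r + c ∧ c + d + r + 1 ≤ m ∧
      dens T U * c ≤ ((C.filter (fun σ => σ.Nonempty ∧ σ ⊆ W')).card : ℝ) ∧
      (m ≤ c + f + d ∨ j ≤ c) := by
    intro j
    induction j with
    | zero =>
      refine ⟨s0 ∪ Y, 0, Finset.Subset.refl _, ?_, by omega, by simp, Or.inr (Nat.zero_le _)⟩
      calc (s0 ∪ Y).card ≤ s0.card + Y.card := Finset.card_union_le _ _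
        _ ≤ d + r + 0 := by rw [hs0card, hYcard]; omega
    | succ j ih =>
      obtain ⟨W', c, hsub, hWc, hm1', hdens, hor⟩ := ih
      by_cases hstop : m ≤ c + f + d
      · exact ⟨W', c, hsub, hWc, hm1', hdens, Or.inl hstop⟩
      push_neg at hstop
      have hWsmall : W'.card + 2 ≤ m := by omega
      set Bad := F.filter (fun xs => xs.toFinset ⊆ W') with hBad
      have hBadcard : Bad.card ≤ W'.card ^ f := by
        have hzex : 0 < n := by omega
        set z : Fin n := ⟨0, hzex⟩ with hz
        have hlenf : ∀ xs ∈ Bad, xs.length = f := by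
          intro xs hxs
          have hxsE : xs ∈ E := (Finset.mem_filter.1 ((Finset.mem_filter.1 hxs).1)).1
          obtain ⟨hlen, -, -, -, -⟩ :=
            embSet_props hC L ρ {ρ} φ0 s0 hOrd hG0 hρimg hρs0 xs hxsE
          rw [hlen, hLf]
        have hinto : ∀ xs ∈ Bad, (fun i : Fin f => xs.getD i z) ∈
            Fintype.piFinset (fun _ : Fin f => W') := by
          intro xs hxs
          rw [Fintype.mem_piFinset]
          intro i
          have hi : (i : ℕ) < xs.length := by rw [hlenf xs hxs]; exact i.2
          simp only [List.getD_eq_getElem?_getD, List.getElem?_eq_getElem hi, Option.getD_some]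
          apply (Finset.mem_filter.1 hxs).2
          rw [List.mem_toFinset]
          exact List.getElem_mem _
        have hinj : Set.InjOn (fun xs : List (Fin n) => fun i : Fin f => xs.getD i z) Bad := by
          intro xs hxs ys hys he
          apply List.ext_getElem (by rw [hlenf xs hxs, hlenf ys hys])
          intro i h1 h2
          have hif : i < f := by rw [← hlenf xs hxs]; exact h1
          have := congrFun he ⟨i, hif⟩
          simpa only [List.getD_eq_getElem?_getD, List.getElem?_eq_getElem h1,
            List.getElem?_eq_getElem h2, Option.getD_some] using this
        have := Finset.card_le_card_of_injOn _ hinto hinj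
        rwa [Fintype.card_piFinset, Finset.prod_const, Finset.card_univ, Fintype.card_fin] at this
      have hlt : Bad.card < F.card := by
        have h1 : W'.card ^ f < m ^ f := Nat.pow_lt_pow_left (by omega) (by omega)
        have h2 : m ^ f ≤ m ^ (f + d) := Nat.pow_le_pow_right hm (by omega)
        omega
      have hnotsub : ¬ F ⊆ Bad := fun hss => absurd (Finset.card_le_card hss) (Nat.not_le.2 hlt)
      obtain ⟨xs, hxsF, hxsBad⟩ := Finset.not_subset.1 hnotsub
      have hxsE : xs ∈ E := (Finset.mem_filter.1 hxsF).1
      have hrY : R.image (endMap φ0 L xs) = Y := (Finset.mem_filter.1 hxsF).2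
      obtain ⟨hlen, heqon, himg, hcards, hGimg⟩ :=
        embSet_props hC L ρ {ρ} φ0 s0 hOrd hG0 hρimg hρs0 xs hxsE
      set ψ := endMap φ0 L xs with hψ
      have hinj : Set.InjOn ψ (accA ρ L) := Finset.card_image_iff.1 (by rw [himg, ← hcards])
      have hinjT : Set.InjOn ψ ↑(T.sup id) := by rw [← hAcc]; exact hinj
      have hallC : ∀ τ ∈ T, τ.image ψ ∈ C := by
        intro τ hτ
        obtain ⟨g, hg, hτg⟩ := hCov τ hτ
        exact hC _ (hGimg g hg) _ (Finset.image_subset_image hτg)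
      have hρψ : ρ.image ψ = s0 := by
        rw [show ρ.image ψ = ρ.image φ0 from Finset.image_congr (fun w hw => heqon w hw), hρimg]
      have hs0W : s0 ⊆ W' := (Finset.union_subset_iff.1 hsub).1
      have hYW : Y ⊆ W' := (Finset.union_subset_iff.1 hsub).2
      have hclass : ∀ w ∈ T.sup id, ψ w ∉ W' → w ∈ U := by
        intro w hw hnW
        rw [hU]
        refine Finset.mem_sdiff.2 ⟨hw, ?_⟩
        intro hwρR
        rcases Finset.mem_union.1 hwρR with h | h
        · exact hnW (hs0W (hρψ ▸ Finset.mem_image_of_mem ψ h))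
        · exact hnW (hYW (hrY ▸ Finset.mem_image_of_mem ψ h))
      set S := U.filter (fun w => ψ w ∉ W') with hS
      have hSsubU : S ⊆ U := Finset.filter_subset _ _
      have hSsup : S ⊆ T.sup id := hSsubU.trans (by rw [hU]; exact Finset.sdiff_subset)
      have hSne : S.Nonempty := by
        have hxsub : ¬ xs.toFinset ⊆ W' := fun hss => hxsBad (Finset.mem_filter.2 ⟨hxsF, hss⟩)
        obtain ⟨x, hxmem, hxW⟩ := Finset.not_subset.1 hxsub
        have hximg : x ∈ (accA ρ L).image ψ := by
          rw [himg]; exact Finset.mem_union_right _ hxmem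
        obtain ⟨w, hw, hwx⟩ := Finset.mem_image.1 hximg
        have hw' : w ∈ T.sup id := by rw [← hAcc]; exact hw
        have hnW : ψ w ∉ W' := by rw [hwx]; exact hxW
        exact ⟨w, Finset.mem_filter.2 ⟨hclass w hw' hnW, hnW⟩⟩
      set W'' := W' ∪ (T.sup id).image ψ with hW''
      have hW''sub : W'' ⊆ W' ∪ S.image ψ := by
        intro x hx
        rcases Finset.mem_union.1 hx with h | h
        · exact Finset.mem_union_left _ h
        · obtain ⟨w, hw, rfl⟩ := Finset.mem_image.1 h
          by_cases hW : ψ w ∈ W'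
          · exact Finset.mem_union_left _ hW
          · refine Finset.mem_union_right _ (Finset.mem_image_of_mem _ ?_)
            exact Finset.mem_filter.2 ⟨hclass w hw hW, hW⟩
      have hW''card : W''.card ≤ W'.card + S.card := by
        have h1 := Finset.card_le_card hW''sub
        have h2 := Finset.card_union_le W' (S.image ψ)
        have h3 := Finset.card_image_le (s := S) (f := ψ)
        omega
      have hcount : (C.filter (fun σ => σ.Nonempty ∧ σ ⊆ W')).card + eCount T S ≤
          (C.filter (fun σ => σ.Nonempty ∧ σ ⊆ W'')).card := by
        set Old := C.filter (fun σ => σ.Nonempty ∧ σ ⊆ W') with hOld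
        set New := (T.filter (fun τ => τ.Nonempty ∧ (τ ∩ S).Nonempty)).image
          (fun τ => τ.image ψ) with hNew
        have hNewcard : New.card = eCount T S := by
          rw [hNew, Finset.card_image_of_injOn]
          · rfl
          · intro τ1 h1 τ2 h2 he
            have hs1 : τ1 ⊆ T.sup id := Finset.le_sup (f := id) (Finset.mem_filter.1 h1).1
            have hs2 : τ2 ⊆ T.sup id := Finset.le_sup (f := id) (Finset.mem_filter.1 h2).1
            exact image_inj_aux hinjT hs1 hs2 he
        have hOldsub : Old ⊆ C.filter (fun σ => σ.Nonempty ∧ σ ⊆ W'') := by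
          intro σ hσ
          rw [hOld, Finset.mem_filter] at hσ
          exact Finset.mem_filter.2 ⟨hσ.1, hσ.2.1, hσ.2.2.trans Finset.subset_union_left⟩
        have hNewsub : New ⊆ C.filter (fun σ => σ.Nonempty ∧ σ ⊆ W'') := by
          intro σ hσ
          obtain ⟨τ, hτ, rfl⟩ := Finset.mem_image.1 hσ
          have hmemτ := Finset.mem_filter.1 hτ
          refine Finset.mem_filter.2 ⟨hallC τ hmemτ.1, hmemτ.2.1.image ψ, ?_⟩
          rw [hW'']
          intro x hx
          obtain ⟨w, hw, rfl⟩ := Finset.mem_image.1 hx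
          exact Finset.mem_union_right _
            (Finset.mem_image_of_mem _ (Finset.le_sup (f := id) hmemτ.1 hw))
        have hdisj : Disjoint Old New := by
          rw [Finset.disjoint_right]
          intro σ hσN hσO
          obtain ⟨τ, hτ, rfl⟩ := Finset.mem_image.1 hσN
          obtain ⟨w, hwτS⟩ := (Finset.mem_filter.1 hτ).2.2
          have hwτ : w ∈ τ := (Finset.mem_inter.1 hwτS).1
          have hwS : w ∈ S := (Finset.mem_inter.1 hwτS).2
          have hψw : ψ w ∉ W' := (Finset.mem_filter.1 hwS).2
          have : ψ w ∈ W' := (Finset.mem_filter.1 hσO).2.2 (Finset.mem_image_of_mem _ hwτ)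
          exact hψw this
        calc Old.card + eCount T S = Old.card + New.card := by rw [hNewcard]
          _ = (Old ∪ New).card := (Finset.card_union_of_disjoint hdisj).symm
          _ ≤ _ := Finset.card_le_card (Finset.union_subset hOldsub hNewsub)
      have hbalS : dens T U * S.card ≤ (eCount T S : ℝ) := by
        have h1 := hbal S hSsubU hSne
        have hSpos : (0:ℝ) < (S.card : ℝ) := by
          exact_mod_cast Finset.card_pos.2 hSne
        rw [dens] at h1
        calc dens T U * S.card ≤ ((eCount T S : ℝ) / S.card) * S.card :=
              mul_le_mul_of_nonneg_right h1 (le_of_lt hSpos)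
          _ = (eCount T S : ℝ) := div_mul_cancel₀ _ (ne_of_gt hSpos)
      have hScard1 : 1 ≤ S.card := Finset.card_pos.2 hSne
      have hSUc : S.card ≤ f - r := by rw [← hUcard]; exact Finset.card_le_card hSsubU
      refine ⟨W'', c + S.card, hsub.trans Finset.subset_union_left, by omega, by omega, ?_,
        Or.inr ?_⟩
      · push_cast
        calc dens T U * ((c:ℝ) + (S.card:ℝ)) = dens T U * c + dens T U * S.card := by ring
          _ ≤ ((C.filter (fun σ => σ.Nonempty ∧ σ ⊆ W')).card : ℝ) + (eCount T S : ℝ) :=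
              add_le_add hdens hbalS
          _ ≤ _ := by exact_mod_cast hcount
      · rcases hor with h | h
        · omega
        · omega

  obtain ⟨W', c, hsub, hWc, hm1', hdens, hor⟩ := Claim m
  have hcfd : m ≤ c + f + d := by
    rcases hor with h | h
    · exact h
    · omega
  have hWm : W'.card ≤ m := by omega
  obtain ⟨W, hWsub, hWcard⟩ :=
    Finset.exists_superset_card_eq hWm (by simpa [Fintype.card_fin] using hmn)
  refine ⟨W, hWcard, ?_⟩
  have hmono : ((C.filter (fun σ => σ.Nonempty ∧ σ ⊆ W')).card : ℝ) ≤
      ((C.filter (fun σ => σ.Nonempty ∧ σ ⊆ W)).card : ℝ) := by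
    have : (C.filter (fun σ => σ.Nonempty ∧ σ ⊆ W')) ⊆
        (C.filter (fun σ => σ.Nonempty ∧ σ ⊆ W)) := by
      intro σ hσ
      simp only [Finset.mem_filter] at hσ ⊢
      exact ⟨hσ.1, hσ.2.1, hσ.2.2.trans hWsub⟩
    exact_mod_cast Finset.card_le_card this
  have hstep1 : dens T U * ((m:ℝ) - f - d) ≤ dens T U * c := by
    apply mul_le_mul_of_nonneg_left _ hdensU0
    have : (m:ℝ) ≤ (c:ℝ) + f + d := by exact_mod_cast hcfd
    linarith
  calc dens T U * ((m:ℝ) - f - d) ≤ dens T U * c := hstep1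
    _ ≤ _ := hdens
    _ ≤ _ := hmono
end

section
/- Let C be a finite simplicial complex, let d' < d be nonnegative integers, and let m ≥ d be an integer with |V(C)| ≥ m. Suppose ρ is a d'-simplex of C that is contained in N simplices of C of dimension d. Then C contains a set of m vertices that spans at least min( N , ((2^{d+1} − 2^{d'+1})/(d − d'))·(m − d) ) nonempty simplices of C. -/
open Finset

/-!
Grow a vertex set `W ⊇ ρ` by adding `d`-simplices `σ ⊇ ρ`. Adding `σ` gains every face of
`σ` not inside `σ ∩ W`, i.e. at least `2^(d+1) - 2^|σ ∩ W|` simplices, and as `|σ ∩ W| ≥ d' + 1`,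
convexity of `x ↦ 2^x` (its chord over `[d' + 1, d + 1]`) bounds this from below by the rate
`(2^(d+1) - 2^(d'+1))/(d - d')` times the number `d + 1 - |σ ∩ W|` of new vertices. A largest
`W` with at most `m` vertices that keeps up this rate either contains all `N` such simplices, or
one of them no longer fits, which forces `|W| > m - (d - d')` and hence `rate · (m - d)` spanned
simplices. Padding `W` to `m` vertices only adds simplices.
-/

lemma secant_slope_mul_le_two_pow_sub {n s D : ℕ} (hns : n ≤ s) (hsD : s ≤ D) :
    ((2 : ℝ) ^ D - 2 ^ n) / ((D : ℝ) - n) * ((D : ℝ) - s) ≤ 2 ^ D - 2 ^ s := by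
  rcases hsD.eq_or_lt with rfl | hsD
  · simp
  have hnD : (n : ℝ) < D := by exact_mod_cast hns.trans_lt hsD
  have hsD' : (s : ℝ) < D := by exact_mod_cast hsD
  have h := (convexOn_rpow_left two_pos).secant_mono (Set.mem_univ (D : ℝ))
    (Set.mem_univ (n : ℝ)) (Set.mem_univ (s : ℝ)) hnD.ne hsD'.ne (by exact_mod_cast hns)
  simp only [Real.rpow_natCast] at h
  rw [← neg_div_neg_eq, ← neg_div_neg_eq (_ - _), neg_sub, neg_sub, neg_sub, neg_sub] at h
  rwa [← le_div_iff₀ (sub_pos.2 hsD')]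

noncomputable def overlapRate (d' d : ℕ) : ℝ :=
  ((2 : ℝ) ^ (d + 1) - 2 ^ (d' + 1)) / ((d : ℝ) - d')

lemma overlapRate_nonneg {d' d : ℕ} (h : d' < d) : 0 ≤ overlapRate d' d :=
  div_nonneg (sub_nonneg.2 (pow_le_pow_right₀ one_le_two (by omega)))
    (sub_nonneg.2 (by exact_mod_cast h.le))

lemma overlapRate_mul_le {d' d s : ℕ} (hs : d' + 1 ≤ s) (hsd : s ≤ d + 1) :
    overlapRate d' d * ((d : ℝ) + 1 - s) ≤ 2 ^ (d + 1) - 2 ^ s := by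
  have h := secant_slope_mul_le_two_pow_sub hs hsd
  push_cast at h
  rwa [add_sub_add_right_eq_sub] at h

section

variable {V : Type*} [DecidableEq V]

def spannedSimplices (C : Finset (Finset V)) (W : Finset V) : Finset (Finset V) :=
  C.filter fun σ => σ.Nonempty ∧ σ ⊆ W

variable {C : Finset (Finset V)}

lemma spannedSimplices_mono {W W' : Finset V} (h : W ⊆ W') :
    spannedSimplices C W ⊆ spannedSimplices C W' :=
  monotone_filter_right C fun _ _ hτ => ⟨hτ.1, hτ.2.trans h⟩

lemma card_spannedSimplices_add_two_pow_le (hC : ∀ σ ∈ C, ∀ τ ⊆ σ, τ ∈ C) {σ : Finset V}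
    (hσ : σ ∈ C) (W : Finset V) :
    #(spannedSimplices C W) + 2 ^ #σ ≤ #(spannedSimplices C (W ∪ σ)) + 2 ^ #(σ ∩ W) := by
  set D := σ.powerset \ (σ ∩ W).powerset
  have hD : #D + 2 ^ #(σ ∩ W) = 2 ^ #σ := by
    rw [← card_powerset, ← card_powerset,
      card_sdiff_add_card_eq_card (powerset_mono.2 inter_subset_left)]
  have hdisj : Disjoint (spannedSimplices C W) D := by
    refine disjoint_left.2 fun τ hτ hτD => ?_
    simp only [spannedSimplices, D, mem_filter, mem_sdiff, mem_powerset, subset_inter_iff]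
      at hτ hτD
    exact hτD.2 ⟨hτD.1, hτ.2.2⟩
  have hsub : spannedSimplices C W ∪ D ⊆ spannedSimplices C (W ∪ σ) := by
    refine union_subset (spannedSimplices_mono subset_union_left) fun τ hτD => ?_
    simp only [D, mem_sdiff, mem_powerset, subset_inter_iff, not_and] at hτD
    refine mem_filter.2
      ⟨hC σ hσ τ hτD.1, nonempty_iff_ne_empty.2 ?_, hτD.1.trans subset_union_right⟩
    rintro rfl
    exact hτD.2 (empty_subset σ) (empty_subset W)
  calc #(spannedSimplices C W) + 2 ^ #σ
      = #(spannedSimplices C W ∪ D) + 2 ^ #(σ ∩ W) := by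
        rw [card_union_of_disjoint hdisj, ← hD, add_assoc]
    _ ≤ #(spannedSimplices C (W ∪ σ)) + 2 ^ #(σ ∩ W) := by gcongr

lemma overlapRate_mul_le_card_spannedSimplices_union (hC : ∀ σ ∈ C, ∀ τ ⊆ σ, τ ∈ C)
    {d' d : ℕ} {ρ σ W : Finset V} (hσ : σ ∈ C) (hρσ : ρ ⊆ σ) (hρW : ρ ⊆ W)
    (hρcard : #ρ = d' + 1) (hσcard : #σ = d + 1)
    (hW : overlapRate d' d * (#W - #ρ) ≤ #(spannedSimplices C W)) :
    overlapRate d' d * (#(W ∪ σ) - #ρ) ≤ #(spannedSimplices C (W ∪ σ)) := by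
  have hs : d' + 1 ≤ #(σ ∩ W) := hρcard ▸ card_le_card (subset_inter hρσ hρW)
  have hsd : #(σ ∩ W) ≤ d + 1 := hσcard ▸ card_le_card inter_subset_left
  have hunion : (#(W ∪ σ) : ℝ) = #W + ((d : ℝ) + 1 - #(σ ∩ W)) := by
    have := card_union_add_card_inter W σ
    rw [inter_comm, hσcard] at this
    have h := congrArg (Nat.cast (R := ℝ)) this
    push_cast at h
    linarith
  have hcount : (#(spannedSimplices C W) : ℝ) + 2 ^ (d + 1)
      ≤ #(spannedSimplices C (W ∪ σ)) + 2 ^ #(σ ∩ W) := by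
    exact_mod_cast hσcard ▸ card_spannedSimplices_add_two_pow_le hC hσ W
  have hchord := overlapRate_mul_le hs hsd
  rw [hunion, add_sub_right_comm, mul_add]
  linarith

lemma exists_maximal_overlap_growth (hC : ∀ σ ∈ C, ∀ τ ⊆ σ, τ ∈ C) {d' d m : ℕ}
    {ρ : Finset V} (hρ : ρ ∈ C) (hρcard : #ρ = d' + 1) (hρm : #ρ ≤ m) :
    ∃ W, ρ ⊆ W ∧ W ⊆ C.sup id ∧ #W ≤ m ∧
      overlapRate d' d * (#W - #ρ) ≤ #(spannedSimplices C W) ∧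
      ∀ σ ∈ C, ρ ⊆ σ → #σ = d + 1 → σ ⊆ W ∨ m < #(W ∪ σ) := by
  set F := (C.sup id).powerset.filter fun W =>
    ρ ⊆ W ∧ #W ≤ m ∧ overlapRate d' d * (#W - #ρ) ≤ #(spannedSimplices C W)
  have hρF : ρ ∈ F := by
    simp only [F, mem_filter, mem_powerset, sub_self, mul_zero, Nat.cast_nonneg, and_true]
    exact ⟨le_sup (f := id) hρ, subset_rfl, hρm⟩
  obtain ⟨W, hWF, hWmax⟩ := F.exists_max_image card ⟨ρ, hρF⟩
  obtain ⟨hWV, hρW, hWm, hWrate⟩ := by simpa only [F, mem_filter, mem_powerset] using hWF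
  refine ⟨W, hρW, hWV, hWm, hWrate, fun σ hσ hρσ hσcard => ?_⟩
  by_contra! ⟨hσW, hσm⟩
  have hσF : W ∪ σ ∈ F := by
    simp only [F, mem_filter, mem_powerset]
    exact ⟨union_subset hWV (le_sup (f := id) hσ), hρW.trans subset_union_left, hσm,
      overlapRate_mul_le_card_spannedSimplices_union hC hσ hρσ hρW hρcard hσcard hWrate⟩
  exact (hWmax _ hσF).not_gt (card_lt_card (left_lt_sup.2 hσW))

lemma min_le_card_spannedSimplices {d' d m : ℕ} (hdd : d' < d) {ρ W : Finset V}
    (hρW : ρ ⊆ W) (hρcard : #ρ = d' + 1)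
    (hWrate : overlapRate d' d * (#W - #ρ) ≤ #(spannedSimplices C W))
    (hWmax : ∀ σ ∈ C, ρ ⊆ σ → #σ = d + 1 → σ ⊆ W ∨ m < #(W ∪ σ)) :
    min (#(C.filter fun τ => ρ ⊆ τ ∧ #τ = d + 1) : ℝ) (overlapRate d' d * ((m : ℝ) - d))
      ≤ #(spannedSimplices C W) := by
  by_cases hall : ∀ σ ∈ C, ρ ⊆ σ → #σ = d + 1 → σ ⊆ W
  · refine (min_le_left _ _).trans (Nat.cast_le.2 (card_le_card fun σ hσ => ?_))
    obtain ⟨hσ, hρσ, hσcard⟩ := by simpa only [mem_filter] using hσ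
    exact mem_filter.2 ⟨hσ, card_pos.1 (by omega), hall σ hσ hρσ hσcard⟩
  push Not at hall
  obtain ⟨σ, hσ, hρσ, hσcard, hσW⟩ := hall
  have hm := (hWmax σ hσ hρσ hσcard).resolve_left hσW
  have hunion : #(W ∪ σ) + #ρ ≤ #W + #σ :=
    card_union_add_card_inter W σ ▸
      Nat.add_le_add_left (card_le_card (subset_inter hρW hρσ)) _
  have hmW : (m : ℝ) - d ≤ #W - #ρ := by
    have : (m : ℝ) + d' + 1 ≤ #W + d := by exact_mod_cast (by omega : m + d' + 1 ≤ #W + d)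
    rw [hρcard]; push_cast; linarith
  exact (min_le_right _ _).trans
    ((mul_le_mul_of_nonneg_left hmW (overlapRate_nonneg hdd)).trans hWrate)

end

theorem overlap_lemma_general {V : Type*} [DecidableEq V]
    (C : Finset (Finset V)) (hC : ∀ σ ∈ C, ∀ τ ⊆ σ, τ ∈ C)
    (d' d m N : ℕ) (hdd : d' < d) (hmd : d ≤ m) (hmV : m ≤ (C.sup id).card)
    (ρ : Finset V) (hρ : ρ ∈ C) (hρcard : ρ.card = d' + 1)
    (hN : (C.filter (fun τ => ρ ⊆ τ ∧ τ.card = d + 1)).card = N) :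
    ∃ W : Finset V, W ⊆ C.sup id ∧ W.card = m ∧
      min (N : ℝ)
        (((2 : ℝ) ^ (d + 1) - 2 ^ (d' + 1)) / ((d : ℝ) - (d' : ℝ)) * ((m : ℝ) - d)) ≤
      ((C.filter (fun σ => σ.Nonempty ∧ σ ⊆ W)).card : ℝ) := by
  obtain ⟨W, hρW, hWV, hWm, hWrate, hWmax⟩ :=
    exists_maximal_overlap_growth (d := d) (m := m) hC hρ hρcard (by omega)
  obtain ⟨W', hWW', hW'V, hW'm⟩ := exists_subsuperset_card_eq hWV hWm hmV
  refine ⟨W', hW'V, hW'm, ?_⟩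
  subst hN
  calc _ ≤ (#(spannedSimplices C W) : ℝ) :=
        min_le_card_spannedSimplices hdd hρW hρcard hWrate hWmax
    _ ≤ #(spannedSimplices C W') := by exact_mod_cast card_le_card (spannedSimplices_mono hWW')

/-- **Lemma (overlap of d-simplices).** Let `C` be a finite simplicial complex, let
`d' < d` and `m ≥ d` with `|V(C)| ≥ m`, and suppose the `d'`-simplex `ρ ∈ C` is
contained in `N` simplices of `C` of dimension `d`.  Then some `m` vertices of `C`
span at least `min(N, ((2^(d+1) − 2^(d'+1))/(d − d'))·(m − d))` nonempty simplices. -/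
theorem overlap_lemma {V : Type*} [DecidableEq V] [Fintype V]
    (C : Finset (Finset V)) (hC : ∀ σ ∈ C, ∀ τ ⊆ σ, τ ∈ C)
    (d' d m N : ℕ) (hdd : d' < d) (hmd : d ≤ m) (hmV : m ≤ (C.sup id).card)
    (ρ : Finset V) (hρ : ρ ∈ C) (hρcard : ρ.card = d' + 1)
    (hN : (C.filter (fun τ => ρ ⊆ τ ∧ τ.card = d + 1)).card = N) :
    ∃ W : Finset V, W ⊆ C.sup id ∧ W.card = m ∧
      min (N : ℝ)
        (((2 : ℝ) ^ (d + 1) - 2 ^ (d' + 1)) / ((d : ℝ) - (d' : ℝ)) * ((m : ℝ) - d)) ≤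
      ((C.filter (fun σ => σ.Nonempty ∧ σ ⊆ W)).card : ℝ) :=
  overlap_lemma_general C hC d' d m N hdd hmd hmV ρ hρ hρcard hN
end

section
/- For every integers d ≥ 1 and m ≥ d and every real constant C > 0, there exist arbitrarily large integers n and a simplicial complex K on n vertices such that f_K(m) ≤ 1 + m + C(m,2) + … + C(m,d) + m − d and f_K(n) > C·n^d. (Consequently, no shatter-function condition of the form 'f_S(m) ≤ 1 + m + … + C(m,d) + m − d for some fixed m' implies the bound f_S(n) = O(n^d) that holds for the set system of halfspaces in R^d.) -/
/-!
Deletion method. Put `n = s ^ (m - d + 1)` and keep each `(d + 1)`-subset of an `n`-set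
independently with probability `p = s ^ (-(m - d))`. The expected number of kept sets is about
`s * n ^ d / (d + 1)!`, while the expected number of kept families of `m - d + 1` sets inside a
common `m`-set is at most a constant times `n ^ d`. Deleting one set from each such family leaves a
`(d + 1)`-uniform hypergraph `H` with more than `C * n ^ d` edges, at most `m - d` of them inside
any `m`-set. All sets of size at most `d` together with `H` form a simplicial complex; on an
`m`-set its trace consists of sets of size at most `d` and at most `m - d` edges of `H`.
-/

open Finset
open scoped Nat

section RandomSubset

variable {α : Type*} [DecidableEq α]

/-- The probability that the `p`-random subset of `E` (elements kept independently) is `G`. -/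
def bernoulliWeight (E : Finset α) (p : ℝ) (G : Finset α) : ℝ := p ^ #G * (1 - p) ^ #(E \ G)

lemma bernoulliWeight_nonneg (E : Finset α) {p : ℝ} (hp₀ : 0 ≤ p) (hp₁ : p ≤ 1) (G : Finset α) :
    0 ≤ bernoulliWeight E p G := by
  unfold bernoulliWeight
  have : 0 ≤ 1 - p := by linarith
  positivity

lemma sum_bernoulliWeight_filter_superset {E B : Finset α} (hB : B ⊆ E) (p : ℝ) :
    ∑ G ∈ E.powerset with B ⊆ G, bernoulliWeight E p G = p ^ #B := by
  have h := prod_add (fun _ => p) (fun i => if i ∈ B then 0 else 1 - p) E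
  have hprod : ∏ i ∈ E, (p + if i ∈ B then 0 else 1 - p) = p ^ #B := by
    calc ∏ i ∈ E, (p + if i ∈ B then 0 else 1 - p) = ∏ i ∈ E, if i ∈ B then p else 1 :=
          prod_congr rfl fun i _ => by split_ifs <;> ring
      _ = p ^ #B := by rw [prod_ite_mem, inter_eq_right.2 hB, prod_const]
  rw [hprod] at h
  rw [h, sum_filter]
  refine sum_congr rfl fun G hG => ?_
  rw [prod_const, bernoulliWeight]
  split_ifs with hBG
  · rw [prod_congr rfl fun i hi => if_neg fun hiB => (mem_sdiff.1 hi).2 (hBG hiB), prod_const]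
  · obtain ⟨i, hiB, hiG⟩ := not_subset.1 hBG
    rw [Finset.prod_eq_zero (f := fun i => if i ∈ B then (0 : ℝ) else 1 - p)
      (mem_sdiff.2 ⟨hB hiB, hiG⟩) (if_pos hiB), mul_zero]

lemma sum_bernoulliWeight_mul_card_filter_subset {E : Finset α} {F : Finset (Finset α)}
    (hF : ∀ B ∈ F, B ⊆ E) (p : ℝ) :
    ∑ G ∈ E.powerset, bernoulliWeight E p G * #{B ∈ F | B ⊆ G} = ∑ B ∈ F, p ^ #B := by
  simp_rw [card_filter, Nat.cast_sum, mul_sum]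
  rw [sum_comm]
  refine sum_congr rfl fun B hB => ?_
  rw [← sum_bernoulliWeight_filter_superset (hF B hB) p, sum_filter]
  exact sum_congr rfl fun G _ => by split_ifs <;> simp

-- The left-hand side is the expectation of the right-hand side for the `p`-random subset `G`.
lemma exists_subset_expected_le {E : Finset α} {F : Finset (Finset α)} (hF : ∀ B ∈ F, B ⊆ E)
    {p : ℝ} (hp₀ : 0 ≤ p) (hp₁ : p ≤ 1) :
    ∃ G ⊆ E, p * #E - ∑ B ∈ F, p ^ #B ≤ (#G : ℝ) - #{B ∈ F | B ⊆ G} := by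
  have hsingle : ∀ G ⊆ E, #{B ∈ E.powersetCard 1 | B ⊆ G} = #G := fun G hG => by
    rw [← Nat.choose_one_right #G, ← card_powersetCard]
    congr 1
    ext B
    simp only [mem_filter, mem_powersetCard]
    exact ⟨fun h => ⟨h.2, h.1.2⟩, fun h => ⟨⟨h.1.trans hG, h.2⟩, h.1⟩⟩
  have hmean : ∑ G ∈ E.powerset, bernoulliWeight E p G * ((#G : ℝ) - #{B ∈ F | B ⊆ G})
      = p * #E - ∑ B ∈ F, p ^ #B := by
    have hE := sum_bernoulliWeight_mul_card_filter_subset (F := E.powersetCard 1)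
      (fun B hB => (mem_powersetCard.1 hB).1) p
    have hsum : ∑ B ∈ E.powersetCard 1, p ^ #B = p * #E := by
      rw [sum_congr rfl fun B hB => by rw [(mem_powersetCard.1 hB).2, pow_one], sum_const,
        card_powersetCard, Nat.choose_one_right, nsmul_eq_mul, mul_comm]
    rw [hsum] at hE
    rw [← hE, ← sum_bernoulliWeight_mul_card_filter_subset hF p, ← sum_sub_distrib]
    refine sum_congr rfl fun G hG => ?_
    rw [hsingle G (mem_powerset.1 hG), mul_sub]
  have htotal : ∑ G ∈ E.powerset, bernoulliWeight E p G = 1 := by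
    simpa using sum_bernoulliWeight_filter_superset (empty_subset E) p
  by_contra! hlt
  have hpos : ∃ G ∈ E.powerset, 0 < bernoulliWeight E p G := by
    by_contra! h
    have := sum_nonpos h
    linarith
  obtain ⟨G₀, hG₀, hw⟩ := hpos
  have := sum_lt_sum (s := E.powerset)
    (f := fun G => bernoulliWeight E p G * ((#G : ℝ) - #{B ∈ F | B ⊆ G}))
    (g := fun G => bernoulliWeight E p G * (p * #E - ∑ B ∈ F, p ^ #B))
    (fun G hG => mul_le_mul_of_nonneg_left (hlt G (mem_powerset.1 hG)).le
      (bernoulliWeight_nonneg E hp₀ hp₁ G))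
    ⟨G₀, hG₀, mul_lt_mul_of_pos_left (hlt G₀ (mem_powerset.1 hG₀)) hw⟩
  rw [hmean, ← sum_mul, htotal, one_mul] at this
  exact lt_irrefl _ this

lemma exists_subset_forall_not_subset_card_le (G : Finset α) {F : Finset (Finset α)}
    (hF : ∀ B ∈ F, B.Nonempty) :
    ∃ G' ⊆ G, (∀ B ∈ F, ¬ B ⊆ G') ∧ #G ≤ #G' + #{B ∈ F | B ⊆ G} := by
  choose x hx using hF
  let hits : Finset α := {B ∈ F | B ⊆ G}.attach.image fun B => x B.1 (mem_filter.1 B.2).1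
  refine ⟨G \ hits, sdiff_subset, fun B hB hBG => ?_, ?_⟩
  · have hhit : x B hB ∈ hits :=
      mem_image.2 ⟨⟨B, mem_filter.2 ⟨hB, hBG.trans sdiff_subset⟩⟩, mem_attach _ _, rfl⟩
    exact (mem_sdiff.1 (hBG (hx B hB))).2 hhit
  · calc #G ≤ #(G \ hits) + #hits := card_le_card_sdiff_add_card
      _ ≤ #(G \ hits) + #{B ∈ F | B ⊆ G} := by
        gcongr
        exact card_image_le.trans (card_attach).le

lemma exists_subset_forall_not_subset_card_ge {E : Finset α} {F : Finset (Finset α)}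
    (hF : ∀ B ∈ F, B ⊆ E ∧ B.Nonempty) {p : ℝ} (hp₀ : 0 ≤ p) (hp₁ : p ≤ 1) :
    ∃ G ⊆ E, (∀ B ∈ F, ¬ B ⊆ G) ∧ p * #E - ∑ B ∈ F, p ^ #B ≤ #G := by
  obtain ⟨G, hGE, hG⟩ := exists_subset_expected_le (fun B hB => (hF B hB).1) hp₀ hp₁
  obtain ⟨G', hG'G, hG'F, hcard⟩ :=
    exists_subset_forall_not_subset_card_le G fun B hB => (hF B hB).2
  refine ⟨G', hG'G.trans hGE, hG'F, hG.trans ?_⟩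
  rw [sub_le_iff_le_add]
  exact_mod_cast hcard

end RandomSubset

section Hypergraph

variable {X : Type*} [Fintype X] [DecidableEq X]

lemma card_filter_card_sup_le (k t r : ℕ) (hr : r ≤ Fintype.card X) :
    #{B ∈ ((univ : Finset X).powersetCard k).powersetCard t | #(B.sup id) ≤ r}
      ≤ (Fintype.card X).choose r * (r.choose k).choose t := by
  have hcover : {B ∈ ((univ : Finset X).powersetCard k).powersetCard t | #(B.sup id) ≤ r}
      ⊆ ((univ : Finset X).powersetCard r).biUnion fun U => (U.powersetCard k).powersetCard t := by
    intro B hB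
    simp only [mem_filter, mem_powersetCard] at hB
    obtain ⟨⟨hBk, hBt⟩, hsup⟩ := hB
    obtain ⟨U, hsupU, -, hU⟩ := exists_subsuperset_card_eq (subset_univ (B.sup id)) hsup
      (by rwa [card_univ])
    refine mem_biUnion.2 ⟨U, mem_powersetCard.2 ⟨subset_univ U, hU⟩, mem_powersetCard.2 ⟨?_, hBt⟩⟩
    intro e he
    exact mem_powersetCard.2 ⟨(le_sup (f := id) he).trans hsupU, (mem_powersetCard.1 (hBk he)).2⟩
  calc _ ≤ _ := card_le_card hcover
    _ ≤ ∑ U ∈ (univ : Finset X).powersetCard r, #((U.powersetCard k).powersetCard t) :=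
        card_biUnion_le
    _ = _ := by
        rw [sum_congr rfl fun U hU => by
          rw [card_powersetCard, card_powersetCard, (mem_powersetCard.1 hU).2],
          sum_const, card_powersetCard, card_univ, smul_eq_mul]

lemma exists_uniform_sparse_card_ge (d m : ℕ) (hm : m ≤ Fintype.card X) {p : ℝ} (hp₀ : 0 ≤ p)
    (hp₁ : p ≤ 1) :
    ∃ H : Finset (Finset X), (∀ e ∈ H, #e = d + 1) ∧
      (∀ Y : Finset X, #Y ≤ m → #{e ∈ H | e ⊆ Y} ≤ m - d) ∧
      p * (Fintype.card X).choose (d + 1)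
        - (Fintype.card X).choose m * (m.choose (d + 1)).choose (m - d + 1) * p ^ (m - d + 1)
        ≤ #H := by
  set E := (univ : Finset X).powersetCard (d + 1)
  set F := {B ∈ E.powersetCard (m - d + 1) | #(B.sup id) ≤ m}
  have hF : ∀ B ∈ F, B ⊆ E ∧ B.Nonempty := fun B hB => by
    obtain ⟨hBE, hBcard⟩ := mem_powersetCard.1 (mem_filter.1 hB).1
    exact ⟨hBE, card_pos.1 (by omega)⟩
  obtain ⟨H, hHE, hHF, hHcard⟩ := exists_subset_forall_not_subset_card_ge hF hp₀ hp₁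
  refine ⟨H, fun e he => (mem_powersetCard.1 (hHE he)).2, fun Y hY => ?_, hHcard.trans' ?_⟩
  · by_contra! hmany
    obtain ⟨B, hBY, hB⟩ := exists_subset_card_eq (show m - d + 1 ≤ #{e ∈ H | e ⊆ Y} by omega)
    have hBH : B ⊆ H := hBY.trans (filter_subset _ _)
    have hsup : B.sup id ⊆ Y := Finset.sup_le fun e he => (mem_filter.1 (hBY he)).2
    exact hHF B (mem_filter.2 ⟨mem_powersetCard.2 ⟨hBH.trans hHE, hB⟩,
      (card_le_card hsup).trans hY⟩) hBH
  · have hFsum : ∑ B ∈ F, p ^ #B = #F * p ^ (m - d + 1) := by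
      rw [sum_congr rfl fun B hB => by rw [(mem_powersetCard.1 (mem_filter.1 hB).1).2],
        sum_const, nsmul_eq_mul]
    have hFcard := card_filter_card_sup_le (X := X) (d + 1) (m - d + 1) m hm
    have hEcard : #E = (Fintype.card X).choose (d + 1) := by
      rw [card_powersetCard, card_univ]
    rw [hFsum, hEcard]
    gcongr
    exact_mod_cast hFcard

end Hypergraph

lemma card_powerset_filter_card_le_le {α : Type*} [DecidableEq α] (Y : Finset α) (d : ℕ) :
    #{σ ∈ Y.powerset | #σ ≤ d} ≤ ∑ i ∈ range (d + 1), (#Y).choose i := by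
  have hcover : {σ ∈ Y.powerset | #σ ≤ d} ⊆ (range (d + 1)).biUnion (Y.powersetCard ·) :=
    fun σ hσ => by
      simp only [mem_filter, mem_powerset] at hσ
      exact mem_biUnion.2 ⟨#σ, mem_range.2 (by omega), mem_powersetCard.2 ⟨hσ.1, rfl⟩⟩
  refine (card_le_card hcover).trans (card_biUnion_le.trans_eq ?_)
  simp only [card_powersetCard]

section Complex

variable {X : Type*} [Fintype X] [DecidableEq X]

lemma shatter_le {S : Finset (Finset X)} {m b : ℕ}
    (h : ∀ Y : Finset X, #Y = m → #(S.image (· ∩ Y)) ≤ b) : shatter S m ≤ b :=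
  Finset.sup_le fun Y hY => h Y (mem_powersetCard.1 hY).2

lemma shatter_card_eq (S : Finset (Finset X)) : shatter S (Fintype.card X) = #S := by
  rw [shatter, ← card_univ, powersetCard_self, sup_singleton]
  simp only [inter_univ, image_id']

def fullSkeleton (d : ℕ) : Finset (Finset X) := {σ | #σ ≤ d}

lemma isLowerSet_fullSkeleton_union {d : ℕ} {H : Finset (Finset X)}
    (hH : ∀ e ∈ H, #e = d + 1) : IsLowerSet (↑(fullSkeleton d ∪ H) : Set (Finset X)) := by
  intro σ τ hτσ hσ
  simp only [fullSkeleton, coe_union, coe_filter, mem_univ, true_and, Set.mem_union,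
    Set.mem_ofPred_eq, mem_coe] at hσ ⊢
  rcases hσ with hσ | hσH
  · exact Or.inl ((card_le_card hτσ).trans hσ)
  · rcases hτσ.eq_or_lt with rfl | hlt
    · exact Or.inr hσH
    · exact Or.inl (by have := card_lt_card hlt; have := hH σ hσH; omega)

lemma card_image_inter_fullSkeleton_union_le {d : ℕ} {H : Finset (Finset X)}
    (hH : ∀ e ∈ H, #e = d + 1) (Y : Finset X) :
    #((fullSkeleton d ∪ H).image (· ∩ Y))
      ≤ ∑ i ∈ range (d + 1), (#Y).choose i + #{e ∈ H | e ⊆ Y} := by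
  have hcover : (fullSkeleton d ∪ H).image (· ∩ Y)
      ⊆ {σ ∈ Y.powerset | #σ ≤ d} ∪ {e ∈ H | e ⊆ Y} := by
    intro τ hτ
    obtain ⟨σ, hσ, rfl⟩ := mem_image.1 hτ
    simp only [fullSkeleton, mem_union, mem_filter, mem_univ, true_and, mem_powerset] at hσ ⊢
    by_cases hσY : σ ⊆ Y
    · rw [inter_eq_left.2 hσY]
      rcases hσ with hσ | hσH
      · exact Or.inl ⟨hσY, hσ⟩
      · exact Or.inr ⟨hσH, hσY⟩
    · refine Or.inl ⟨inter_subset_right, ?_⟩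
      have hlt : #(σ ∩ Y) < #σ :=
        card_lt_card (inter_subset_left.ssubset_of_ne fun h => hσY (h ▸ inter_subset_right))
      rcases hσ with hσ | hσH
      · omega
      · have := hH σ hσH; omega
  calc _ ≤ _ := card_le_card hcover
    _ ≤ _ := card_union_le _ _
    _ ≤ _ := by gcongr; exact card_powerset_filter_card_le_le Y d

end Complex

lemma choose_mul_inv_pow_le_pow (d m : ℕ) {s : ℕ} (hs : 0 < s) (hdm : d ≤ m) :
    ((s ^ (m - d + 1)).choose m : ℝ) * (((s : ℝ) ^ (m - d))⁻¹) ^ (m - d + 1)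
      ≤ ((s ^ (m - d + 1) : ℕ) : ℝ) ^ d := by
  have hpow : ((s ^ (m - d + 1) : ℕ) : ℝ) ^ m
      = ((s ^ (m - d + 1) : ℕ) : ℝ) ^ d * ((s : ℝ) ^ (m - d)) ^ (m - d + 1) := by
    rw [← Nat.add_sub_cancel' hdm, pow_add, Nat.add_sub_cancel_left]
    push_cast
    ring
  have hs' : (0 : ℝ) < (s : ℝ) ^ (m - d) := by positivity
  calc ((s ^ (m - d + 1)).choose m : ℝ) * (((s : ℝ) ^ (m - d))⁻¹) ^ (m - d + 1)
      ≤ ((s ^ (m - d + 1) : ℕ) : ℝ) ^ m * (((s : ℝ) ^ (m - d))⁻¹) ^ (m - d + 1) := by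
        gcongr
        exact_mod_cast Nat.choose_le_pow _ _
    _ = ((s ^ (m - d + 1) : ℕ) : ℝ) ^ d := by
        rw [hpow, inv_pow, mul_assoc, mul_inv_cancel₀ (by positivity), mul_one]

lemma pow_div_le_choose (d : ℕ) {n : ℕ} (hn : 2 * d ≤ n) :
    (n : ℝ) ^ (d + 1) / (2 ^ (d + 1) * (d + 1)!) ≤ n.choose (d + 1) := by
  have h := Nat.pow_le_choose (α := ℝ) (d + 1) n
  have hsub : (n : ℝ) ≤ 2 * ((n + 1 - (d + 1) : ℕ) : ℝ) := by
    rw [show n + 1 - (d + 1) = n - d by omega, Nat.cast_sub (by omega)]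
    have : (2 * d : ℝ) ≤ n := by exact_mod_cast hn
    linarith
  refine le_trans ?_ h
  rw [div_le_div_iff₀ (by positivity) (by positivity)]
  calc (n : ℝ) ^ (d + 1) * (d + 1)! ≤ (2 * ((n + 1 - (d + 1) : ℕ) : ℝ)) ^ (d + 1) * (d + 1)! := by
        gcongr
    _ = _ := by ring

lemma mul_pow_lt_inv_mul_choose_sub (d m : ℕ) {s : ℕ} (hs₀ : 0 < s) (hdm : d ≤ m)
    (hsm : 2 * m ≤ s) {C c : ℝ} (hc : 0 ≤ c) (hs : 2 ^ (d + 1) * (d + 1)! * (C + c) < s) :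
    C * ((s ^ (m - d + 1) : ℕ) : ℝ) ^ d
      < ((s : ℝ) ^ (m - d))⁻¹ * (s ^ (m - d + 1)).choose (d + 1)
        - (s ^ (m - d + 1)).choose m * c * (((s : ℝ) ^ (m - d))⁻¹) ^ (m - d + 1) := by
  set n := s ^ (m - d + 1)
  set Q : ℝ := 2 ^ (d + 1) * (d + 1)!
  have hQ : 0 < Q := by positivity
  have hn : (n : ℝ) = (s : ℝ) ^ (m - d) * s := by simp [n, pow_succ]
  have hnd : 0 < (n : ℝ) ^ d := by positivity
  have hmain : (n : ℝ) ^ d * s / Q ≤ ((s : ℝ) ^ (m - d))⁻¹ * n.choose (d + 1) := by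
    have h2d : 2 * d ≤ n := by
      have : s ≤ n := Nat.le_self_pow (by omega) s
      omega
    calc (n : ℝ) ^ d * s / Q = ((s : ℝ) ^ (m - d))⁻¹ * ((n : ℝ) ^ (d + 1) / Q) := by
          rw [pow_succ, hn]
          field_simp
      _ ≤ _ := by gcongr; exact pow_div_le_choose d h2d
  have hbad : (n.choose m : ℝ) * c * (((s : ℝ) ^ (m - d))⁻¹) ^ (m - d + 1) ≤ c * (n : ℝ) ^ d := by
    rw [mul_comm _ c, mul_assoc]
    exact mul_le_mul_of_nonneg_left (choose_mul_inv_pow_le_pow d m hs₀ hdm) hc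
  have hsQ : C + c < s / Q := by rw [lt_div_iff₀ hQ]; linarith
  calc C * (n : ℝ) ^ d < (s / Q - c) * (n : ℝ) ^ d := by gcongr; linarith
    _ = (n : ℝ) ^ d * s / Q - c * (n : ℝ) ^ d := by ring
    _ ≤ _ := by linarith

theorem no_sharp_shatter_condition_general (d m : ℕ) (hmd : d ≤ m)
    (C : ℝ) (n₀ : ℕ) :
    ∃ n : ℕ, n₀ ≤ n ∧ ∃ K : Finset (Finset (Fin n)),
      (∀ σ ∈ K, ∀ τ ⊆ σ, τ ∈ K) ∧
      shatter K m ≤ (∑ i ∈ Finset.range (d + 1), m.choose i) + (m - d) ∧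
      C * (n : ℝ) ^ d < (shatter K n : ℝ) := by
  set c : ℕ := (m.choose (d + 1)).choose (m - d + 1)
  set s := n₀ + 2 * m + ⌈2 ^ (d + 1) * (d + 1)! * (C + c)⌉₊ + 1
  have hs : 2 ^ (d + 1) * (d + 1)! * (C + c) < s := by
    have := Nat.le_ceil (2 ^ (d + 1) * (d + 1)! * (C + c))
    push_cast [s]
    linarith
  set n := s ^ (m - d + 1)
  have hsn : s ≤ n := Nat.le_self_pow (by omega) s
  obtain ⟨H, hHunif, hHsparse, hHcard⟩ := exists_uniform_sparse_card_ge (X := Fin n) d m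
    (by simp only [Fintype.card_fin]; omega) (p := ((s : ℝ) ^ (m - d))⁻¹) (by positivity)
    (inv_le_one_of_one_le₀ (one_le_pow₀ (by exact_mod_cast (by omega : 1 ≤ s))))
  simp only [Fintype.card_fin] at hHcard
  refine ⟨n, by omega, fullSkeleton d ∪ H,
    fun σ hσ τ hτ => isLowerSet_fullSkeleton_union hHunif hτ hσ, shatter_le fun Y hY => ?_, ?_⟩
  · have htrace := card_image_inter_fullSkeleton_union_le hHunif Y
    rw [hY] at htrace
    exact htrace.trans (Nat.add_le_add_left (hHsparse Y hY.le) _)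
  · have hK := shatter_card_eq (fullSkeleton d ∪ H)
    rw [Fintype.card_fin] at hK
    rw [hK]
    calc C * (n : ℝ) ^ d < #H :=
          (mul_pow_lt_inv_mul_choose_sub d m (by omega) hmd (by omega) c.cast_nonneg hs).trans_le
            hHcard
      _ ≤ #(fullSkeleton d ∪ H) := by exact_mod_cast card_le_card subset_union_right

/-- **Remark.** For integers `d ≥ 1`, `m ≥ d` and any real `C > 0`, there exist
arbitrarily large `n` and a simplicial complex `K` on `n` vertices with
`f_K(m) ≤ 1 + m + C(m,2) + … + C(m,d) + m − d` and `f_K(n) > C·n^d`.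
(Hence no shatter condition of this form implies the bound `O(n^d)` valid for
halfspaces in `ℝ^d`.) -/
theorem no_sharp_shatter_condition (d m : ℕ) (hd : 1 ≤ d) (hmd : d ≤ m)
    (C : ℝ) (hC : 0 < C) (n₀ : ℕ) :
    ∃ n : ℕ, n₀ ≤ n ∧ ∃ K : Finset (Finset (Fin n)),
      (∀ σ ∈ K, ∀ τ ⊆ σ, τ ∈ K) ∧
      shatter K m ≤ (∑ i ∈ Finset.range (d + 1), m.choose i) + (m - d) ∧
      C * (n : ℝ) ^ d < (shatter K n : ℝ) :=
  no_sharp_shatter_condition_general d m hmd C n₀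
end
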